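/- arXiv:1109.3495 — 7 statements merged into one kernel-verified Lean document; each statement's English description precedes it below -/
import Mathlib

section
/- Let T > 0, let f ∈ L¹(ℝ) ∩ L²(ℝ), and let u ∈ L²(ℝ) satisfy f(x) = u(x−T) − u(x) for almost every x ∈ ℝ. Then for every integer k, the Fourier transform of f vanishes at k/T: f̂(k/T) = 0. -/
/-!
The character `e x = exp (-2π i x k / T)` is `T`-periodic, so `∫ f e` is `1 / N` times the
integral of `g_N x = ∑_{j < N} f (x + j T)` against `e`. The relation `f = u (· - T) - u`
telescopes: `g_N = u (· - T) - u (· + (N - 1) T)` almost everywhere, a function of `L²` norm at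
most `2 ‖u‖₂`. By Cauchy–Schwarz its `L¹` norm on the ball of radius `2 N T` is `O(√N)`, while
outside that ball each translate of `f` contributes at most the tail `∫_{|y| > N T} ‖f‖`, which
tends to `0`. Hence `‖∫ f e‖ ≤ O(N^{-1/2}) + o(1)`.
-/

open MeasureTheory Complex Filter Topology Metric Finset

lemma setIntegral_norm_le_eLpNorm_two_mul_sqrt {α E : Type*} [MeasurableSpace α]
    [NormedAddCommGroup E] {μ : Measure α} {w : α → E} (hw : MemLp w 2 μ) {s : Set α}
    (hs : μ s ≠ ⊤) :
    ∫ x in s, ‖w x‖ ∂μ ≤ (eLpNorm w 2 μ).toReal * √(μ s).toReal := by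
  have hle : eLpNorm w 1 (μ.restrict s) ≤ eLpNorm w 2 μ * μ s ^ (1 / 2 : ℝ) := by
    have := eLpNorm_le_eLpNorm_mul_rpow_measure_univ (p := 1) (q := 2) one_le_two
      hw.1.restrict (μ := μ.restrict s)
    rw [Measure.restrict_apply_univ] at this
    refine this.trans ?_
    norm_num
    gcongr
    exact Measure.restrict_le_self
  rw [integral_norm_eq_lintegral_enorm hw.1.restrict, ← eLpNorm_one_eq_lintegral_enorm,
    Real.sqrt_eq_rpow, ENNReal.toReal_rpow, ← ENNReal.toReal_mul]
  exact ENNReal.toReal_mono (ENNReal.mul_ne_top hw.2.ne (by simp [hs])) hle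

section Translates

variable {E : Type*} [NormedAddCommGroup E]

lemma ae_sum_range_comp_add_mul_eq_sub {f u : ℝ → E} {T : ℝ}
    (heq : ∀ᵐ x : ℝ, f x = u (x - T) - u x) (N : ℕ) :
    ∀ᵐ x : ℝ, ∑ j ∈ range N, f (x + j * T) = u (x - T) - u (x + N * T - T) := by
  have hshift (j : ℕ) : ∀ᵐ x : ℝ, f (x + j * T) = u (x + j * T - T) - u (x + j * T) :=
    (measurePreserving_add_right volume (j * T)).quasiMeasurePreserving.ae heq
  filter_upwards [ae_all_iff.mpr hshift] with x hx
  have hstep (j : ℕ) : u (x + j * T) = u (x + ↑(j + 1) * T - T) := by push_cast; ring_nf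
  simpa [hx, hstep] using sum_range_sub' (fun j : ℕ => u (x + j * T - T)) N

lemma tendsto_setIntegral_compl_closedBall_norm {f : ℝ → E} (hf : Integrable f) :
    Tendsto (fun R => ∫ y in (closedBall 0 R)ᶜ, ‖f y‖) atTop (𝓝 0) := by
  have hempty : ⋂ R : ℝ, (closedBall (0 : ℝ) R)ᶜ = ∅ :=
    Set.eq_empty_of_forall_notMem fun y hy =>
      Set.mem_iInter.mp hy |y| (by simp [Real.norm_eq_abs])
  simpa [hempty] using tendsto_setIntegral_of_antitone (s := fun R => (closedBall (0 : ℝ) R)ᶜ)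
    (fun R => measurableSet_closedBall.compl)
    (fun R R' h => Set.compl_subset_compl.mpr (closedBall_subset_closedBall h))
    ⟨0, hf.norm.integrableOn⟩

lemma setIntegral_compl_closedBall_norm_comp_add_le {f : ℝ → E} (hf : Integrable f)
    {a r R : ℝ} (h : r + |a| ≤ R) :
    ∫ x in (closedBall 0 R)ᶜ, ‖f (x + a)‖ ≤ ∫ y in (closedBall 0 r)ᶜ, ‖f y‖ := by
  rw [← integral_indicator measurableSet_closedBall.compl,
    ← integral_indicator measurableSet_closedBall.compl,
    ← integral_add_right_eq_self ((closedBall (0 : ℝ) r)ᶜ.indicator fun y => ‖f y‖) a]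
  refine integral_mono_of_nonneg (Eventually.of_forall fun x => ?_)
    ((hf.norm.indicator measurableSet_closedBall.compl).comp_add_right a)
    (Eventually.of_forall fun x => ?_)
  · exact Set.indicator_nonneg (fun _ _ => norm_nonneg _) x
  · by_cases hx : x ∈ (closedBall (0 : ℝ) R)ᶜ
    · have hxa : x + a ∈ (closedBall (0 : ℝ) r)ᶜ := by
        simp only [Set.mem_compl_iff, mem_closedBall, dist_zero_right, Real.norm_eq_abs,
          not_le] at hx ⊢
        have := abs_add_le (x + a) (-a)
        rw [add_neg_cancel_right, abs_neg] at this
        linarith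
      simp [Set.indicator_of_mem hx, Set.indicator_of_mem hxa]
    · rw [Set.indicator_of_notMem hx]
      exact Set.indicator_nonneg (fun _ _ => norm_nonneg _) _

lemma setIntegral_compl_closedBall_norm_sum_translates_le {f : ℝ → E} (hf : Integrable f)
    {T : ℝ} (hT : 0 ≤ T) (N : ℕ) :
    ∫ x in (closedBall 0 (2 * N * T))ᶜ, ‖∑ j ∈ range N, f (x + j * T)‖ ≤
      N * ∫ y in (closedBall 0 (N * T))ᶜ, ‖f y‖ := by
  have hint (j : ℕ) : Integrable fun x => ‖f (x + j * T)‖ := (hf.comp_add_right _).norm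
  calc ∫ x in (closedBall 0 (2 * N * T))ᶜ, ‖∑ j ∈ range N, f (x + j * T)‖
      ≤ ∫ x in (closedBall 0 (2 * N * T))ᶜ, ∑ j ∈ range N, ‖f (x + j * T)‖ :=
        integral_mono_of_nonneg (Eventually.of_forall fun _ => norm_nonneg _)
          (integrable_finsetSum _ fun j _ => hint j).integrableOn
          (Eventually.of_forall fun _ => norm_sum_le _ _)
    _ = ∑ j ∈ range N, ∫ x in (closedBall 0 (2 * N * T))ᶜ, ‖f (x + j * T)‖ :=
        integral_finsetSum _ fun j _ => (hint j).integrableOn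
    _ ≤ ∑ _j ∈ range N, ∫ y in (closedBall 0 (N * T))ᶜ, ‖f y‖ := by
        refine sum_le_sum fun j hj => setIntegral_compl_closedBall_norm_comp_add_le hf ?_
        have hjN : (j : ℝ) ≤ N := by exact_mod_cast (mem_range.mp hj).le
        rw [abs_of_nonneg (by positivity)]
        nlinarith
    _ = N * ∫ y in (closedBall 0 (N * T))ᶜ, ‖f y‖ := by simp

lemma setIntegral_closedBall_norm_sub_comp_add_le {u : ℝ → E} (hu : MemLp u 2) (a b R : ℝ) :
    ∫ x in closedBall 0 R, ‖u (x + a) - u (x + b)‖ ≤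
      2 * (eLpNorm u 2 volume).toReal * √(2 * R) := by
  have htr (c : ℝ) := measurePreserving_add_right volume c
  have hmem (c : ℝ) : MemLp (fun x => u (x + c)) 2 := hu.comp_measurePreserving (htr c)
  have hnorm (c : ℝ) : eLpNorm (fun x => u (x + c)) 2 volume = eLpNorm u 2 volume :=
    eLpNorm_comp_measurePreserving hu.1 (htr c)
  have hsub : eLpNorm (fun x => u (x + a) - u (x + b)) 2 volume ≤ 2 * eLpNorm u 2 volume := by
    calc _ ≤ eLpNorm (fun x => u (x + a)) 2 volume + eLpNorm (fun x => u (x + b)) 2 volume :=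
          eLpNorm_sub_le (hmem a).1 (hmem b).1 one_le_two
      _ = 2 * eLpNorm u 2 volume := by
          rw [hnorm, hnorm, two_mul]
  have hvol : √(volume (closedBall (0 : ℝ) R)).toReal = √(2 * R) := by
    rw [Real.volume_closedBall, ENNReal.toReal_ofReal']
    rcases le_total 0 R with hR | hR
    · rw [max_eq_left (by linarith)]
    · rw [max_eq_right (by linarith), Real.sqrt_zero, Real.sqrt_eq_zero_of_nonpos (by linarith)]
  calc _ ≤ (eLpNorm (fun x => u (x + a) - u (x + b)) 2 volume).toReal *
        √(volume (closedBall (0 : ℝ) R)).toReal :=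
        setIntegral_norm_le_eLpNorm_two_mul_sqrt ((hmem a).sub (hmem b)) measure_closedBall_lt_top.ne
    _ ≤ 2 * (eLpNorm u 2 volume).toReal * √(2 * R) := by
        rw [hvol, ← ENNReal.toReal_ofNat 2, ← ENNReal.toReal_mul]
        gcongr
        exact ENNReal.mul_ne_top (by simp) hu.2.ne

lemma integral_norm_sum_translates_le {f u : ℝ → E} {T : ℝ} (hT : 0 ≤ T) (hf : Integrable f)
    (hu : MemLp u 2) (heq : ∀ᵐ x : ℝ, f x = u (x - T) - u x) (N : ℕ) :
    ∫ x, ‖∑ j ∈ range N, f (x + j * T)‖ ≤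
      2 * (eLpNorm u 2 volume).toReal * √(4 * N * T) +
        N * ∫ y in (closedBall 0 (N * T))ᶜ, ‖f y‖ := by
  have hg : Integrable fun x => ‖∑ j ∈ range N, f (x + j * T)‖ :=
    (integrable_finsetSum _ fun j _ => hf.comp_add_right _).norm
  rw [← integral_add_compl (measurableSet_closedBall (x := 0) (ε := 2 * N * T)) hg]
  refine add_le_add ?_ (setIntegral_compl_closedBall_norm_sum_translates_le hf hT N)
  have hball : ∫ x in closedBall 0 (2 * N * T), ‖∑ j ∈ range N, f (x + j * T)‖ =
      ∫ x in closedBall 0 (2 * N * T), ‖u (x + -T) - u (x + (N * T - T))‖ := by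
    refine integral_congr_ae (ae_restrict_of_ae ?_)
    filter_upwards [ae_sum_range_comp_add_mul_eq_sub heq N] with x hx
    rw [hx, ← sub_eq_add_neg, add_sub_assoc]
  rw [hball]
  exact (setIntegral_closedBall_norm_sub_comp_add_le hu _ _ _).trans_eq (by ring_nf)

end Translates

section Periodic

variable {f e : ℝ → ℂ}

lemma integral_comp_add_mul_of_periodic {a : ℝ} (he : Function.Periodic e a) :
    ∫ x, f (x + a) * e x = ∫ x, f x * e x := by
  simpa [he.sub_eq] using integral_add_right_eq_self (fun y => f y * e (y - a)) a

lemma integral_sum_translates_mul_of_periodic {T C : ℝ} (hf : Integrable f)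
    (he : Function.Periodic e T) (he_meas : AEStronglyMeasurable e) (he_bdd : ∀ x, ‖e x‖ ≤ C)
    (N : ℕ) :
    ∫ x, (∑ j ∈ range N, f (x + j * T)) * e x = N * ∫ x, f x * e x := by
  have hint (j : ℕ) : Integrable fun x => f (x + j * T) * e x := by
    simpa only [mul_comm] using
      (hf.comp_add_right (j * T)).bdd_mul he_meas (Eventually.of_forall he_bdd)
  simp_rw [sum_mul]
  rw [integral_finsetSum _ fun j _ => hint j]
  simp [integral_comp_add_mul_of_periodic (he.nat_mul _)]

lemma norm_integral_mul_le_of_periodic {u : ℝ → ℂ} {T C : ℝ} (hT : 0 ≤ T)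
    (hf : Integrable f) (hu : MemLp u 2) (heq : ∀ᵐ x : ℝ, f x = u (x - T) - u x)
    (he : Function.Periodic e T) (he_meas : AEStronglyMeasurable e) (he_bdd : ∀ x, ‖e x‖ ≤ C)
    {N : ℕ} (hN : 0 < N) :
    ‖∫ x, f x * e x‖ ≤ C * (2 * (eLpNorm u 2 volume).toReal * √(4 * T / N) +
      ∫ y in (closedBall 0 (N * T))ᶜ, ‖f y‖) := by
  have hC : 0 ≤ C := (norm_nonneg _).trans (he_bdd 0)
  have hN' : (0 : ℝ) < N := Nat.cast_pos.mpr hN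
  have hsqrt : √(4 * N * T) = N * √(4 * T / N) := by
    rw [show 4 * N * T = (N : ℝ) ^ 2 * (4 * T / N) by field_simp,
      Real.sqrt_mul (sq_nonneg _), Real.sqrt_sq hN'.le]
  have hg := (integrable_finsetSum (range N) fun j _ => hf.comp_add_right (j * T)).norm
  refine le_of_mul_le_mul_left ?_ hN'
  calc N * ‖∫ x, f x * e x‖ = ‖∫ x, (∑ j ∈ range N, f (x + j * T)) * e x‖ := by
        rw [integral_sum_translates_mul_of_periodic hf he he_meas he_bdd, norm_mul,
          norm_natCast]
    _ ≤ ∫ x, C * ‖∑ j ∈ range N, f (x + j * T)‖ :=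
        norm_integral_le_of_norm_le (hg.const_mul C) (Eventually.of_forall fun x => by
          rw [norm_mul, mul_comm]
          exact mul_le_mul_of_nonneg_right (he_bdd x) (norm_nonneg _))
    _ ≤ C * (2 * (eLpNorm u 2 volume).toReal * √(4 * N * T) +
          N * ∫ y in (closedBall 0 (N * T))ᶜ, ‖f y‖) := by
        rw [integral_const_mul]
        exact mul_le_mul_of_nonneg_left (integral_norm_sum_translates_le hT hf hu heq N) hC
    _ = N * (C * (2 * (eLpNorm u 2 volume).toReal * √(4 * T / N) +
          ∫ y in (closedBall 0 (N * T))ᶜ, ‖f y‖)) := by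
        rw [hsqrt]
        ring

theorem integral_mul_eq_zero_of_periodic {u : ℝ → ℂ} {T C : ℝ} (hT : 0 < T)
    (hf : Integrable f) (hu : MemLp u 2) (heq : ∀ᵐ x : ℝ, f x = u (x - T) - u x)
    (he : Function.Periodic e T) (he_meas : AEStronglyMeasurable e) (he_bdd : ∀ x, ‖e x‖ ≤ C) :
    ∫ x, f x * e x = 0 := by
  have hsqrt : Tendsto (fun N : ℕ => √(4 * T / N)) atTop (𝓝 0) := by
    have := (tendsto_const_nhds (x := 4 * T)).div_atTop tendsto_natCast_atTop_atTop |>.sqrt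
    rwa [Real.sqrt_zero] at this
  have htail : Tendsto (fun N : ℕ => ∫ y in (closedBall 0 (N * T))ᶜ, ‖f y‖) atTop (𝓝 0) :=
    (tendsto_setIntegral_compl_closedBall_norm hf).comp
      (tendsto_natCast_atTop_atTop.atTop_mul_const hT)
  have hlim := ((hsqrt.const_mul (2 * (eLpNorm u 2 volume).toReal)).add htail).const_mul C
  rw [mul_zero, add_zero, mul_zero] at hlim
  exact norm_le_zero_iff.mp (ge_of_tendsto hlim (eventually_atTop.mpr
    ⟨1, fun N hN => norm_integral_mul_le_of_periodic hT.le hf hu heq he he_meas he_bdd hN⟩))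

end Periodic

lemma periodic_cexp_int_div (k : ℤ) {T : ℝ} (hT : T ≠ 0) :
    Function.Periodic (fun x : ℝ => cexp (-2 * Real.pi * I * x * ((k : ℝ) / T))) T := by
  intro x
  have hT' : (T : ℂ) ≠ 0 := ofReal_ne_zero.mpr hT
  have harg : -2 * Real.pi * I * ((x + T : ℝ) : ℂ) * ((k : ℝ) / T) =
      -2 * Real.pi * I * x * ((k : ℝ) / T) + (-k : ℤ) * (2 * Real.pi * I) := by
    push_cast
    field_simp
    ring
  dsimp only
  rw [harg, exp_add, exp_int_mul_two_pi_mul_I, mul_one]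

theorem stmt_0_general (T : ℝ) (hT : 0 < T) (f u : ℝ → ℂ)
    (hf1 : Integrable f (volume : Measure ℝ))
    (hu : MemLp u 2 (volume : Measure ℝ))
    (heq : ∀ᵐ x : ℝ, f x = u (x - T) - u x) :
    ∀ k : ℤ,
      (∫ x : ℝ, f x * Complex.exp (-2 * Real.pi * I * x * ((k : ℝ) / T))) = 0 := by
  intro k
  refine integral_mul_eq_zero_of_periodic hT hf1 hu heq (periodic_cexp_int_div k hT.ne')
    (by fun_prop : Continuous _).aestronglyMeasurable (C := 1) fun x => by simp [norm_exp]

/-- If `f ∈ L¹(ℝ) ∩ L²(ℝ)`, `u ∈ L²(ℝ)` and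
`f(x) = u(x−T) − u(x)` almost everywhere, then the Fourier transform of `f`
vanishes at every point `k/T`, `k ∈ ℤ`. -/
theorem stmt_0 (T : ℝ) (hT : 0 < T) (f u : ℝ → ℂ)
    (hf1 : Integrable f (volume : Measure ℝ))
    (hf2 : MemLp f 2 (volume : Measure ℝ))
    (hu : MemLp u 2 (volume : Measure ℝ))
    (heq : ∀ᵐ x : ℝ, f x = u (x - T) - u x) :
    ∀ k : ℤ,
      (∫ x : ℝ, f x * Complex.exp (-2 * Real.pi * I * x * ((k : ℝ) / T))) = 0 :=
  stmt_0_general T hT f u hf1 hu heq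
end

section
/- Let ν ≥ 1 be real, T > 0, and let f and u be holomorphic functions on the upper half-plane ℍ = {z ∈ ℂ : Im z > 0} with ∫_ℍ |f(x+iy)|² y^{ν−1} dx dy < ∞ and ∫_ℍ |u(x+iy)|² y^{ν−1} dx dy < ∞. Suppose f(·+iy) ∈ L¹(ℝ) for every y > 0, and f(z) = u(z−T) − u(z) for all z ∈ ℍ. Then for almost every y > 0 and every integer k, ∫_ℝ f(x+iy) e^{−2πi(k/T)x} dx = 0. -/
/-!
Fix `y > 0` and put `g x = u (x + i y)`, `h x = f (x + i y)`, `e x = exp (-2πi k x / T)`.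
By Fubini, `g ∈ L²(ℝ)` for almost every `y`, and `h = g(· - T) - g`. Since `e` is `T`-periodic,
the integral of `h e` over `[-R, R]` telescopes to the difference of the integrals of `g e` over
the two windows `[-R - T, -R]` and `[R - T, R]`. On a window of fixed length the `L¹` norm of `g`
is controlled by its `L²` norm, which tends to `0` as the window escapes to `±∞`; letting
`R → ∞` gives `∫ h e = 0`.
-/

open MeasureTheory Complex Filter Set Topology intervalIntegral

theorem le_add_sq_div (x : ℝ) {δ : ℝ} (hδ : 0 < δ) : x ≤ δ + x ^ 2 / δ := by
  rw [add_div' _ _ _ hδ.ne', le_div_iff₀ hδ]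
  nlinarith [sq_nonneg (δ - x)]

theorem tendsto_zero_of_forall_le_mul_add_div {ι : Type*} {l : Filter ι} {S A : ι → ℝ} {C : ℝ}
    (hC : 0 ≤ C) (hS : ∀ i, 0 ≤ S i) (hSA : ∀ δ > 0, ∀ i, S i ≤ δ * C + A i / δ)
    (hA : Tendsto A l (𝓝 0)) : Tendsto S l (𝓝 0) := by
  refine tendsto_order.2 ⟨fun b hb => Eventually.of_forall fun i => hb.trans_le (hS i),
    fun ε hε => ?_⟩
  set δ := ε / (2 * (C + 1))
  have hδ : 0 < δ := by positivity
  have hδC : δ * C ≤ ε / 2 := by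
    rw [div_mul_eq_mul_div, div_le_div_iff₀ (by positivity) two_pos]
    nlinarith
  filter_upwards [hA.eventually (gt_mem_nhds (show 0 < δ * (ε / 2) by positivity))] with i hi
  have hAδ : A i / δ < ε / 2 := by rwa [div_lt_iff₀' hδ]
  linarith [hSA δ hδ i]

section Windows

variable {l : Filter ℝ} {T : ℝ}

theorem tendsto_intervalIntegral_window_of_tendsto {w : ℝ → ℝ} {L : ℝ}
    (hw : ∀ a b, IntervalIntegrable w volume a b)
    (hF : Tendsto (fun a => ∫ x in (0 : ℝ)..a, w x) l (𝓝 L)) (hl : Tendsto (· - T) l l) :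
    Tendsto (fun a => ∫ x in (a - T)..a, w x) l (𝓝 0) := by
  have := hF.sub (hF.comp hl)
  rw [sub_self] at this
  exact this.congr fun a => integral_interval_sub_left (hw _ _) (hw _ _)

theorem MeasureTheory.Integrable.tendsto_intervalIntegral_window_atTop {w : ℝ → ℝ}
    (hw : Integrable w) (T : ℝ) :
    Tendsto (fun a => ∫ x in (a - T)..a, w x) atTop (𝓝 0) :=
  tendsto_intervalIntegral_window_of_tendsto (fun _ _ => hw.intervalIntegrable)
    (intervalIntegral_tendsto_integral_Ioi 0 hw.integrableOn tendsto_id)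
    ((tendsto_atTop_add_const_right _ (-T) tendsto_id).congr fun a => (sub_eq_add_neg a T).symm)

theorem MeasureTheory.Integrable.tendsto_intervalIntegral_window_atBot {w : ℝ → ℝ}
    (hw : Integrable w) (T : ℝ) :
    Tendsto (fun a => ∫ x in (a - T)..a, w x) atBot (𝓝 0) :=
  tendsto_intervalIntegral_window_of_tendsto (fun _ _ => hw.intervalIntegrable)
    ((intervalIntegral_tendsto_integral_Iic 0 hw.integrableOn tendsto_id).neg.congr
      fun a => (integral_symm a 0).symm)
    ((tendsto_atBot_add_const_right _ (-T) tendsto_id).congr fun a => (sub_eq_add_neg a T).symm)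

theorem intervalIntegral_norm_le_mul_add_div {E : Type*} [NormedAddCommGroup E] {g : ℝ → E}
    (hg : Continuous g) {a b δ : ℝ} (hab : a ≤ b) (hδ : 0 < δ) :
    ∫ x in a..b, ‖g x‖ ≤ δ * (b - a) + (∫ x in a..b, ‖g x‖ ^ 2) / δ := by
  have hsq : Continuous fun x => ‖g x‖ ^ 2 := by fun_prop
  calc ∫ x in a..b, ‖g x‖
      ≤ ∫ x in a..b, (δ + ‖g x‖ ^ 2 / δ) :=
        integral_mono_on hab (hg.norm.intervalIntegrable _ _)
          ((continuous_const.add (hsq.div_const δ)).intervalIntegrable _ _)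
          fun x _ => le_add_sq_div _ hδ
    _ = δ * (b - a) + (∫ x in a..b, ‖g x‖ ^ 2) / δ := by
        rw [integral_add intervalIntegrable_const ((hsq.div_const δ).intervalIntegrable _ _),
          intervalIntegral.integral_const, intervalIntegral.integral_div, smul_eq_mul, mul_comm]

theorem tendsto_intervalIntegral_mul_window {g e : ℝ → ℂ} (hT : 0 ≤ T) (hg : Continuous g)
    (he1 : ∀ x, ‖e x‖ ≤ 1)
    (hg2 : Tendsto (fun a => ∫ x in (a - T)..a, ‖g x‖ ^ 2) l (𝓝 0)) :
    Tendsto (fun a => ∫ x in (a - T)..a, g x * e x) l (𝓝 0) := by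
  have hle : ∀ a : ℝ, a - T ≤ a := fun a => by linarith
  refine squeeze_zero_norm (fun a => norm_integral_le_of_norm_le (hle a) ?_
    (hg.norm.intervalIntegrable _ _)) ?_
  · refine Eventually.of_forall fun x _ => ?_
    simpa only [norm_mul] using mul_le_of_le_one_right (norm_nonneg _) (he1 x)
  · refine tendsto_zero_of_forall_le_mul_add_div hT
      (fun a => integral_nonneg (hle a) fun x _ => norm_nonneg _) (fun δ hδ a => ?_) hg2
    simpa only [sub_sub_cancel] using intervalIntegral_norm_le_mul_add_div hg (hle a) hδ

end Windows

theorem intervalIntegral_sub_comp_sub_mul_periodic {g e : ℝ → ℂ} {T : ℝ} (hg : Continuous g)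
    (he : Continuous e) (hper : Function.Periodic e T) (a b : ℝ) :
    ∫ x in a..b, (g (x - T) - g x) * e x
      = (∫ x in (a - T)..a, g x * e x) - ∫ x in (b - T)..b, g x * e x := by
  have hge : ∀ p q, IntervalIntegrable (fun x => g x * e x) volume p q :=
    fun p q => (hg.mul he).intervalIntegrable p q
  have hshift : ∫ x in a..b, g (x - T) * e x = ∫ x in (a - T)..(b - T), g x * e x :=
    calc ∫ x in a..b, g (x - T) * e x = ∫ x in a..b, g (x - T) * e (x - T) := by
          simp only [hper.sub_eq]
      _ = ∫ x in (a - T)..(b - T), g x * e x := integral_comp_sub_right (fun x => g x * e x) T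
  simp_rw [sub_mul]
  have hshifted : IntervalIntegrable (fun x => g (x - T) * e x) volume a b :=
    ((hg.comp (continuous_sub_right T)).mul he).intervalIntegrable _ _
  rw [integral_sub hshifted (hge a b), hshift,
    integral_interval_sub_interval_comm (hge _ _) (hge _ _) (hge _ _)]

theorem integral_mul_eq_zero_of_eq_sub_comp_sub {g h e : ℝ → ℂ} {T : ℝ} (hT : 0 ≤ T)
    (hg : Continuous g) (hg2 : Integrable fun x => ‖g x‖ ^ 2) (hh : Integrable h)
    (he : Continuous e) (he1 : ∀ x, ‖e x‖ ≤ 1) (hper : Function.Periodic e T)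
    (hgh : ∀ x, h x = g (x - T) - g x) :
    ∫ x, h x * e x = 0 := by
  have hhe : Integrable fun x => h x * e x :=
    hh.mul_bdd he.aestronglyMeasurable (Eventually.of_forall he1)
  have hsym : Tendsto (fun R => ∫ x in (-R)..R, h x * e x) atTop (𝓝 (∫ x, h x * e x)) :=
    intervalIntegral_tendsto_integral hhe tendsto_neg_atTop_atBot tendsto_id
  have hleft := (tendsto_intervalIntegral_mul_window hT hg he1
    (hg2.tendsto_intervalIntegral_window_atBot T)).comp tendsto_neg_atTop_atBot
  have hright := tendsto_intervalIntegral_mul_window hT hg he1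
    (hg2.tendsto_intervalIntegral_window_atTop T)
  have htele := hleft.sub hright
  rw [sub_zero] at htele
  refine tendsto_nhds_unique hsym (htele.congr fun R => ?_)
  simp_rw [hgh]
  exact (intervalIntegral_sub_comp_sub_mul_periodic hg he hper (-R) R).symm

theorem periodic_exp_mul_int_div (k : ℤ) {T : ℝ} (hT : T ≠ 0) :
    Function.Periodic (fun x : ℝ => exp (-2 * Real.pi * I * ((k : ℝ) / T) * x)) T := by
  intro x
  have hT' : (T : ℂ) ≠ 0 := ofReal_ne_zero.2 hT
  simp only
  rw [show (-2 * Real.pi * I * ((k : ℝ) / T) * ((x + T : ℝ) : ℂ) : ℂ)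
      = -2 * Real.pi * I * ((k : ℝ) / T) * x + (-k : ℤ) * (2 * Real.pi * I) by
    push_cast; field_simp; ring, exp_add, exp_int_mul_two_pi_mul_I, mul_one]

theorem ae_integrable_slice_of_integrableOn_mul {F : ℝ × ℝ → ℝ} {w : ℝ → ℝ} {s : Set ℝ}
    (hs : MeasurableSet s) (hw : ∀ y ∈ s, w y ≠ 0)
    (hF : IntegrableOn (fun p => F p * w p.2) (univ ×ˢ s)) :
    ∀ᵐ y ∂volume.restrict s, Integrable fun x => F (x, y) := by
  rw [IntegrableOn, Measure.volume_eq_prod, ← Measure.prod_restrict, Measure.restrict_univ] at hF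
  filter_upwards [hF.prod_left_ae, ae_restrict_mem hs] with y hy hys
  simpa [mul_inv_cancel_right₀ (hw y hys)] using hy.mul_const (w y)⁻¹

theorem stmt_1_general (ν T : ℝ) (hT : 0 < T) (f u : ℂ → ℂ)
    (hu : DifferentiableOn ℂ u {z : ℂ | 0 < z.im})
    (huL2 : IntegrableOn
      (fun p : ℝ × ℝ => ‖u (p.1 + p.2 * I)‖ ^ 2 * p.2 ^ (ν - 1))
      (Set.univ ×ˢ Set.Ioi (0 : ℝ)))
    (hfL1 : ∀ y : ℝ, 0 < y → Integrable (fun x : ℝ => f (x + y * I)))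
    (heq : ∀ z : ℂ, 0 < z.im → f z = u (z - T) - u z) :
    ∀ᵐ y : ℝ ∂(volume.restrict (Set.Ioi (0 : ℝ))), ∀ k : ℤ,
      (∫ x : ℝ, f (x + y * I) *
        Complex.exp (-2 * Real.pi * I * ((k : ℝ) / T) * x)) = 0 := by
  filter_upwards [ae_integrable_slice_of_integrableOn_mul
      (F := fun p => ‖u (p.1 + p.2 * I)‖ ^ 2) (w := fun y => y ^ (ν - 1))
      measurableSet_Ioi (fun y hy => (Real.rpow_pos_of_pos hy _).ne') huL2,
    ae_restrict_mem measurableSet_Ioi] with y hu2 (hy : 0 < y) k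
  have hline : ∀ x : ℝ, (x + y * I : ℂ) ∈ {z : ℂ | 0 < z.im} := fun x => by simpa using hy
  have hslice : Continuous fun x : ℝ => u (x + y * I) :=
    hu.continuousOn.comp_continuous (by fun_prop) hline
  refine integral_mul_eq_zero_of_eq_sub_comp_sub (h := fun x : ℝ => f (x + y * I))
    (e := fun x : ℝ => exp (-2 * Real.pi * I * ((k : ℝ) / T) * x)) hT.le hslice hu2 (hfL1 y hy)
    (by fun_prop) (fun x => le_of_eq (by rw [norm_exp]; simp))
    (periodic_exp_mul_int_div k hT.ne') fun x => ?_
  rw [heq _ (hline x), ofReal_sub, sub_add_eq_add_sub]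

/-- Discrete-series setting: if `f, u` are holomorphic on the upper
half-plane, square-integrable with respect to `y^{ν−1} dx dy` (for some real `ν ≥ 1`),
`f(·+iy) ∈ L¹(ℝ)` for every `y > 0`, and `f(z) = u(z−T) − u(z)` for all `z` in the upper
half-plane, then for almost every `y > 0` and every integer `k`,
`∫ f(x+iy) e^{−2πi(k/T)x} dx = 0`. -/
theorem stmt_1 (ν T : ℝ) (hν : 1 ≤ ν) (hT : 0 < T) (f u : ℂ → ℂ)
    (hf : DifferentiableOn ℂ f {z : ℂ | 0 < z.im})
    (hu : DifferentiableOn ℂ u {z : ℂ | 0 < z.im})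
    (hfL2 : IntegrableOn
      (fun p : ℝ × ℝ => ‖f (p.1 + p.2 * I)‖ ^ 2 * p.2 ^ (ν - 1))
      (Set.univ ×ˢ Set.Ioi (0 : ℝ)))
    (huL2 : IntegrableOn
      (fun p : ℝ × ℝ => ‖u (p.1 + p.2 * I)‖ ^ 2 * p.2 ^ (ν - 1))
      (Set.univ ×ˢ Set.Ioi (0 : ℝ)))
    (hfL1 : ∀ y : ℝ, 0 < y → Integrable (fun x : ℝ => f (x + y * I)))
    (heq : ∀ z : ℂ, 0 < z.im → f z = u (z - T) - u z) :
    ∀ᵐ y : ℝ ∂(volume.restrict (Set.Ioi (0 : ℝ))), ∀ k : ℤ,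
      (∫ x : ℝ, f (x + y * I) *
        Complex.exp (-2 * Real.pi * I * ((k : ℝ) / T) * x)) = 0 :=
  stmt_1_general ν T hT f u hu huL2 hfL1 heq
end

section
/- Let T > 0, let s ≥ 1 be an integer, let ν ∈ ℂ with Re ν ≥ 0, let A > 0, and let f ∈ C^s(ℝ) satisfy |f^{(r)}(x)| ≤ A (1+|x|)^{−(s+r+1+Re ν)} for every integer 0 ≤ r ≤ s and all x ∈ ℝ. Assume moreover that f̂(k/T) = 0 for every integer k. Then the series u(x) = Σ_{m=1}^∞ f(x+mT) converges for every x, defines a C^s function satisfying u(x−T) − u(x) = f(x) for all x ∈ ℝ, and there is a constant C > 0 depending only on s such that for every integer 0 ≤ r ≤ s and all x ∈ ℝ: |u^{(r)}(x)| ≤ (C/T) · A · (1+|x|)^{−(s+r+Re ν)}. -/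
open MeasureTheory Complex
open scoped FourierTransform Real

/-!
Write `u = ∑_{m ≥ 1} f (· + m T)`. Since `f^{(r)}` decays with exponent `β = s + r + 1 + Re ν ≥ 2`,
the shifted series of `f` and of all its derivatives converge locally uniformly, so `u` is `C^s`,
is differentiated termwise, and `u (x - T) - u x = f x` by telescoping. For `x ≥ -T/2` all points
`x + m T` lie to the right of `x`, and comparing the sum with an integral gives
`|u^{(r)} x| ≤ (3/T) A (1 + |x|)^{1 - β}`. For `x < -T/2` this comparison fails; but
`𝓕 f^{(r)} (k/T) = (2πik/T)^r 𝓕 f (k/T) = 0`, so Poisson summation gives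
`∑_{n ∈ ℤ} f^{(r)} (x + n T) = 0`, i.e. `u^{(r)} x = -∑_{m ≥ 0} f^{(r)} (x - m T)`, a sum over
points to the left of `x` that is bounded in the same way.
-/

section RpowSums

variable {a T β : ℝ}

lemma sum_range_rpow_neg_le (hT : 0 < T) (ha : 0 < a) (hβ : 1 < β) (n : ℕ) :
    ∑ i ∈ Finset.range n, (a + (i + 1) * T) ^ (-β) ≤ a ^ (1 - β) / (T * (β - 1)) := by
  have hpos : ∀ t ∈ Set.Icc (0 : ℝ) n, 0 < T * t + a := fun t ht => by nlinarith [ht.1]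
  have hanti : AntitoneOn (fun t : ℝ => (T * t + a) ^ (-β)) (Set.Icc 0 (0 + n)) := by
    intro p hp q hq hpq
    rw [zero_add] at hp hq
    exact Real.rpow_le_rpow_of_nonpos (hpos p hp) (by nlinarith) (by linarith)
  have h0 : (0 : ℝ) ∉ Set.uIcc a (T * n + a) := by
    rw [Set.uIcc_of_le (by nlinarith [n.cast_nonneg (α := ℝ)])]
    exact fun h => ha.not_ge h.1
  have hint : ∫ t in (0 : ℝ)..n, (T * t + a) ^ (-β) =
      T⁻¹ * (((T * n + a) ^ (1 - β) - a ^ (1 - β)) / (1 - β)) := by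
    rw [intervalIntegral.integral_comp_mul_add (fun x => x ^ (-β)) hT.ne',
      integral_rpow (Or.inr ⟨by linarith, by simpa using h0⟩), mul_zero, zero_add, smul_eq_mul,
      neg_add_eq_sub]
  calc ∑ i ∈ Finset.range n, (a + (i + 1) * T) ^ (-β)
      = ∑ i ∈ Finset.range n, (T * (0 + ((i + 1 : ℕ) : ℝ)) + a) ^ (-β) := by
        refine Finset.sum_congr rfl fun i _ => ?_
        push_cast; ring_nf
    _ ≤ ∫ t in (0 : ℝ)..0 + n, (T * t + a) ^ (-β) := hanti.sum_le_integral
    _ ≤ a ^ (1 - β) / (T * (β - 1)) := by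
        rw [zero_add, hint, ← neg_sub β 1, div_neg, ← neg_div, neg_sub, inv_mul_eq_div, div_div,
          mul_comm (β - 1)]
        gcongr
        exact sub_le_self _ (Real.rpow_nonneg (by positivity) _)

lemma summable_rpow_neg (hT : 0 < T) (ha : 0 < a) (hβ : 1 < β) :
    Summable fun m : ℕ => (a + (m + 1) * T) ^ (-β) :=
  summable_of_sum_range_le (fun _ => Real.rpow_nonneg (by positivity) _)
    (sum_range_rpow_neg_le hT ha hβ)

lemma tsum_rpow_neg_le (hT : 0 < T) (ha : 0 < a) (hβ : 1 < β) :
    ∑' m : ℕ, (a + (m + 1) * T) ^ (-β) ≤ a ^ (1 - β) / (T * (β - 1)) :=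
  (summable_rpow_neg hT ha hβ).tsum_le_of_sum_range_le (sum_range_rpow_neg_le hT ha hβ)

lemma norm_tsum_le_of_norm_le_rpow {E : Type*} [NormedAddCommGroup E] {A : ℝ} {g : ℕ → E}
    (hT : 0 < T) (ha : T / 2 ≤ a) (hβ : 2 ≤ β) (hg : ∀ m, ‖g m‖ ≤ A * (a + m * T) ^ (-β)) :
    ‖∑' m, g m‖ ≤ 3 / T * A * a ^ (1 - β) := by
  have ha0 : 0 < a := by linarith
  have hA : 0 ≤ A := nonneg_of_mul_nonneg_left ((norm_nonneg _).trans (hg 0))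
    (Real.rpow_pos_of_pos (by simpa using ha0) _)
  have hsum : Summable fun m : ℕ => (a + m * T) ^ (-β) := by
    rw [← summable_nat_add_iff 1]
    exact_mod_cast summable_rpow_neg hT ha0 (by linarith)
  have hhead : a ^ (-β) ≤ 2 / T * a ^ (1 - β) := by
    rw [show -β = (1 - β) + (-1) by ring, Real.rpow_add ha0, Real.rpow_neg_one, mul_comm]
    gcongr
    rw [inv_le_comm₀ ha0 (by positivity), inv_div]
    exact ha
  have htail : a ^ (1 - β) / (T * (β - 1)) ≤ 1 / T * a ^ (1 - β) := by
    rw [div_mul_eq_mul_div, one_mul]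
    gcongr
    nlinarith
  calc ‖∑' m, g m‖ ≤ ∑' m : ℕ, A * (a + m * T) ^ (-β) :=
        tsum_of_norm_bounded (hsum.mul_left A).hasSum hg
    _ = A * (a ^ (-β) + ∑' m : ℕ, (a + (m + 1) * T) ^ (-β)) := by
        rw [tsum_mul_left, hsum.tsum_eq_zero_add]
        push_cast
        simp
    _ ≤ A * (2 / T * a ^ (1 - β) + 1 / T * a ^ (1 - β)) := by
        gcongr
        exact (tsum_rpow_neg_le hT ha0 (by linarith)).trans htail
    _ = 3 / T * A * a ^ (1 - β) := by ring

end RpowSums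

section LocallySummableBound

variable {ι F : Type*} [NormedAddCommGroup F] [CompleteSpace F]

def HasLocallySummableBound (g : ι → ℝ → F) : Prop :=
  ∀ R : ℝ, ∃ u : ι → ℝ, Summable u ∧ ∀ i y, |y| < R → ‖g i y‖ ≤ u i

namespace HasLocallySummableBound

variable {g g' : ι → ℝ → F}

lemma summable (h : HasLocallySummableBound g) (y : ℝ) : Summable fun i => g i y := by
  obtain ⟨u, hu, hgu⟩ := h (|y| + 1)
  exact .of_norm_bounded hu fun i => hgu i y (by linarith)

lemma continuous_tsum (h : HasLocallySummableBound g) (hc : ∀ i, Continuous (g i)) :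
    Continuous fun y => ∑' i, g i y := by
  refine continuous_iff_continuousAt.mpr fun x => ?_
  obtain ⟨u, hu, hgu⟩ := h (|x| + 1)
  have hball : Metric.ball (0 : ℝ) (|x| + 1) ∈ nhds x :=
    Metric.isOpen_ball.mem_nhds (by simp)
  refine (continuousOn_tsum (fun i => (hc i).continuousOn) hu fun i y hy => hgu i y ?_).continuousAt
    hball
  simpa using hy

variable [NormedSpace ℝ F]

lemma hasDerivAt_tsum (h' : HasLocallySummableBound g')
    (hg : ∀ i y, HasDerivAt (g i) (g' i y) y) (hsum : ∀ y, Summable fun i => g i y) (x : ℝ) :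
    HasDerivAt (fun y => ∑' i, g i y) (∑' i, g' i x) x := by
  obtain ⟨u, hu, hgu⟩ := h' (|x| + 1)
  have hx : x ∈ Metric.ball (0 : ℝ) (|x| + 1) := by simp
  exact hasDerivAt_tsum_of_isPreconnected hu Metric.isOpen_ball (convex_ball _ _).isPreconnected
    (fun i y _ => hg i y) (fun i y hy => hgu i y (by simpa using hy)) hx (hsum x) hx

end HasLocallySummableBound

variable [NormedSpace ℝ F] {N : ℕ} {f : ι → ℝ → F}

lemma iteratedDeriv_tsum_of_locallySummableBound (hf : ∀ i, ContDiff ℝ N (f i))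
    (hb : ∀ k ≤ N, HasLocallySummableBound fun i => iteratedDeriv k (f i)) {k : ℕ} (hk : k ≤ N) :
    iteratedDeriv k (fun y => ∑' i, f i y) = fun y => ∑' i, iteratedDeriv k (f i) y := by
  induction k with
  | zero => simp only [iteratedDeriv_zero]
  | succ k ih =>
    ext x
    rw [iteratedDeriv_succ, ih (by omega)]
    refine ((hb (k + 1) hk).hasDerivAt_tsum (fun i y => ?_) (hb k (by omega)).summable x).deriv
    rw [iteratedDeriv_succ]
    exact ((hf i).differentiable_iteratedDeriv k (by exact_mod_cast hk) y).hasDerivAt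

lemma contDiff_tsum_of_locallySummableBound (hf : ∀ i, ContDiff ℝ N (f i))
    (hb : ∀ k ≤ N, HasLocallySummableBound fun i => iteratedDeriv k (f i)) :
    ContDiff ℝ N fun y => ∑' i, f i y := by
  rw [contDiff_nat_iff_iteratedDeriv]
  refine ⟨fun k hk => ?_, fun k hk => ?_⟩
  · rw [iteratedDeriv_tsum_of_locallySummableBound hf hb (by exact_mod_cast hk)]
    exact (hb k (by exact_mod_cast hk)).continuous_tsum fun i =>
      (hf i).continuous_iteratedDeriv k (by exact_mod_cast hk)
  · rw [iteratedDeriv_tsum_of_locallySummableBound hf hb (by exact_mod_cast hk.le)]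
    intro x
    refine ((hb (k + 1) (by exact_mod_cast hk)).hasDerivAt_tsum (fun i y => ?_)
      (hb k (by exact_mod_cast hk.le)).summable x).differentiableAt
    rw [iteratedDeriv_succ]
    exact ((hf i).differentiable_iteratedDeriv k (by exact_mod_cast hk) y).hasDerivAt

end LocallySummableBound

lemma one_add_abs_add_rpow_neg_le {β : ℝ} (hβ : 0 ≤ β) (x y : ℝ) :
    (1 + |x + y|) ^ (-β) ≤ (1 + |x|) ^ β * (1 + |y|) ^ (-β) := by
  have hy : 1 + |y| ≤ (1 + |x|) * (1 + |x + y|) := by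
    have := abs_add_le (-x) (x + y)
    rw [neg_add_cancel_left, abs_neg] at this
    nlinarith [abs_nonneg x, abs_nonneg (x + y)]
  have hpow := Real.rpow_le_rpow (by positivity) hy hβ
  rw [Real.mul_rpow (by positivity) (by positivity)] at hpow
  rw [Real.rpow_neg (by positivity), Real.rpow_neg (by positivity), ← div_eq_mul_inv,
    le_div_iff₀ (by positivity), ← div_eq_inv_mul, div_le_iff₀ (by positivity)]
  exact hpow

def DecayBound {E : Type*} [NormedAddCommGroup E] (g : ℝ → E) (A β : ℝ) : Prop :=
  ∀ x, ‖g x‖ ≤ A * (1 + |x|) ^ (-β)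

namespace DecayBound

variable {E : Type*} [NormedAddCommGroup E] {g : ℝ → E} {A β : ℝ}

lemma nonneg (hg : DecayBound g A β) : 0 ≤ A :=
  nonneg_of_mul_nonneg_left ((norm_nonneg _).trans (hg 0)) (by simp)

lemma norm_comp_add_le (hg : DecayBound g A β) (hβ : 0 ≤ β) (x y : ℝ) :
    ‖g (x + y)‖ ≤ A * (1 + |x|) ^ β * (1 + |y|) ^ (-β) := by
  rw [mul_assoc]
  exact (hg _).trans (mul_le_mul_of_nonneg_left (one_add_abs_add_rpow_neg_le hβ x y) hg.nonneg)

lemma integrable (hg : DecayBound g A β) (hc : Continuous g) (hβ : 1 < β) : Integrable g :=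
  ((integrable_one_add_norm (E := ℝ) (by simpa using hβ)).const_mul A).mono'
    hc.aestronglyMeasurable (ae_of_all _ hg)

lemma isBigO (hg : DecayBound g A β) (hβ : 0 ≤ β) :
    g =O[Filter.cocompact ℝ] (|·| ^ (-β)) := by
  refine Asymptotics.IsBigO.of_bound A ?_
  filter_upwards [(Filter.hasBasis_cocompact.mem_iff.mpr ⟨{0}, isCompact_singleton, subset_rfl⟩)]
    with x hx
  have hx0 : 0 < |x| := abs_pos.mpr hx
  rw [Real.norm_of_nonneg (by positivity)]
  exact (hg x).trans (mul_le_mul_of_nonneg_left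
    (Real.rpow_le_rpow_of_nonpos hx0 (by linarith) (by linarith)) hg.nonneg)

lemma hasLocallySummableBound_shift [CompleteSpace E] (hg : DecayBound g A β) (hβ : 1 < β)
    {c : ℝ} (hc : c ≠ 0) :
    HasLocallySummableBound fun (m : ℕ) y => g (y + (m + 1) * c) := by
  intro R
  refine ⟨fun m => A * (1 + R) ^ β * (1 + (m + 1) * |c|) ^ (-β),
    (summable_rpow_neg (abs_pos.mpr hc) one_pos hβ).mul_left _, fun m y hy => ?_⟩
  refine (hg.norm_comp_add_le (by linarith) y _).trans ?_
  rw [abs_mul, abs_of_nonneg (by positivity : (0 : ℝ) ≤ m + 1)]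
  dsimp only
  gcongr
  exact hg.nonneg

end DecayBound

lemma Real.fourier_eq_integral_mul_exp (f : ℝ → ℂ) (ξ : ℝ) :
    𝓕 f ξ = ∫ x : ℝ, f x * Complex.exp (-2 * π * I * x * ξ) := by
  rw [Real.fourier_real_eq_integral_exp_smul]
  congr 1 with x
  rw [smul_eq_mul, mul_comm]
  push_cast
  ring_nf

lemma Real.fourier_comp_mul_left {E : Type*} [NormedAddCommGroup E] [NormedSpace ℂ E]
    (f : ℝ → E) {c : ℝ} (hc : c ≠ 0) (ξ : ℝ) :
    𝓕 (fun y => f (c * y)) ξ = |c⁻¹| • 𝓕 f (ξ / c) := by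
  rw [Real.fourier_real_eq_integral_exp_smul, Real.fourier_real_eq_integral_exp_smul,
    ← Measure.integral_comp_mul_left _ c]
  congr 1 with y
  congr 4
  field_simp

lemma Real.fourier_iteratedDeriv_eq_zero {f : ℝ → ℂ} {N r : ℕ} (hf : ContDiff ℝ N f)
    (hint : ∀ k ≤ N, Integrable (iteratedDeriv k f)) (hr : r ≤ N) {ξ : ℝ} (hξ : 𝓕 f ξ = 0) :
    𝓕 (iteratedDeriv r f) ξ = 0 := by
  rw [Real.fourier_iteratedDeriv hf (fun k hk => hint k (by exact_mod_cast hk))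
    (by exact_mod_cast hr)]
  exact smul_eq_zero_of_right _ hξ

namespace DecayBound

variable {g : ℝ → ℂ} {A β T : ℝ}

lemma tsum_int_shift_eq_zero (hg : DecayBound g A β) (hc : Continuous g) (hβ : 1 < β)
    (hT : T ≠ 0) (hF : ∀ n : ℤ, 𝓕 g (n / T) = 0) (x : ℝ) :
    ∑' n : ℤ, g (x + n * T) = 0 := by
  set h : ℝ → ℂ := fun y => g (T * y)
  have hFh (n : ℤ) : 𝓕 h n = 0 := by
    rw [Real.fourier_comp_mul_left g hT, hF n, smul_zero]
  have hO : h =O[Filter.cocompact ℝ] (|·| ^ (-β)) := by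
    have := (hg.isBigO (by linarith)).comp_tendsto (Filter.tendsto_cocompact_mul_left₀ hT)
    refine this.trans (Asymptotics.IsBigO.of_bound (|T| ^ (-β)) (Filter.Eventually.of_forall
      fun y => ?_))
    simp only [Function.comp_apply, abs_mul, Real.mul_rpow (abs_nonneg T) (abs_nonneg y)]
    rw [Real.norm_of_nonneg (by positivity), Real.norm_of_nonneg (by positivity)]
  have := Real.tsum_eq_tsum_fourier_of_rpow_decay_of_summable (f := h)
    (hc.comp (continuous_const_mul T)) hβ hO (summable_zero.congr fun n => (hFh n).symm) (x / T)
  simp only [hFh, zero_mul, tsum_zero] at this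
  rw [← this]
  congr 1 with n
  simp only [h]
  congr 1
  field_simp

lemma tsum_shift_eq_neg (hg : DecayBound g A β) (hc : Continuous g) (hβ : 1 < β)
    (hT : T ≠ 0) (hF : ∀ n : ℤ, 𝓕 g (n / T) = 0) (x : ℝ) :
    ∑' m : ℕ, g (x + (m + 1) * T) = -∑' m : ℕ, g (x - m * T) := by
  have hfwd := (hg.hasLocallySummableBound_shift hβ hT).summable x
  have hbwd := (hg.hasLocallySummableBound_shift hβ (neg_ne_zero.mpr hT)).summable x
  have hZ := tsum_of_add_one_of_neg_add_one (f := fun n : ℤ => g (x + n * T))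
    (hfwd.congr fun m => by push_cast; ring_nf) (hbwd.congr fun m => by push_cast; ring_nf)
  have hN : ∑' m : ℕ, g (x - m * T) = g x + ∑' m : ℕ, g (x + (m + 1) * -T) := by
    rw [Summable.tsum_eq_zero_add
      (by rw [← summable_nat_add_iff 1]; simpa [sub_eq_add_neg] using hbwd)]
    simp [sub_eq_add_neg]
  rw [hg.tsum_int_shift_eq_zero hc hβ hT hF] at hZ
  have hpos : ∑' m : ℕ, g (x + ((m + 1 : ℤ) : ℝ) * T) = ∑' m : ℕ, g (x + (m + 1) * T) :=
    tsum_congr fun m => by push_cast; ring_nf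
  have hneg : ∑' m : ℕ, g (x + ((-(m + 1) : ℤ) : ℝ) * T) = ∑' m : ℕ, g (x + (m + 1) * -T) :=
    tsum_congr fun m => by push_cast; ring_nf
  rw [hpos, hneg, Int.cast_zero, zero_mul, add_zero] at hZ
  linear_combination hN - hZ

lemma norm_tsum_shift_le (hg : DecayBound g A β) (hc : Continuous g) (hβ : 2 ≤ β) (hT : 0 < T)
    (hF : ∀ n : ℤ, 𝓕 g (n / T) = 0) (x : ℝ) :
    ‖∑' m : ℕ, g (x + (m + 1) * T)‖ ≤ 3 / T * A * (1 + |x|) ^ (1 - β) := by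
  rcases le_or_gt (-(T / 2)) x with hx | hx
  · have hxa : 1 + |x| ≤ 1 + x + T := by cases abs_cases x <;> linarith
    refine (norm_tsum_le_of_norm_le_rpow (A := A) (a := 1 + x + T) hT
      (by linarith [abs_nonneg x]) hβ fun m => ?_).trans ?_
    · have hmT : T ≤ (m + 1) * T := le_mul_of_one_le_left hT.le (by simp)
      refine (hg _).trans_eq ?_
      rw [abs_of_nonneg (by linarith)]
      ring_nf
    · exact mul_le_mul_of_nonneg_left (Real.rpow_le_rpow_of_nonpos (by positivity) hxa
        (by linarith)) (mul_nonneg (by positivity) hg.nonneg)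
  · rw [hg.tsum_shift_eq_neg hc (by linarith) hT.ne' hF, norm_neg]
    have hx0 : |x| = -x := abs_of_neg (by linarith)
    refine norm_tsum_le_of_norm_le_rpow hT (by linarith) hβ fun m => (hg _).trans_eq ?_
    have hmT : 0 ≤ m * T := by positivity
    rw [abs_of_neg (by linarith), hx0]
    ring_nf

end DecayBound

lemma tsum_sub_tsum_shift {E : Type*} [NormedAddCommGroup E] {g : ℝ → E} {T x : ℝ}
    (hg : Summable fun m : ℕ => g (x + (m + 1) * T)) :
    ∑' m : ℕ, g (x - T + (m + 1) * T) - ∑' m : ℕ, g (x + (m + 1) * T) = g x := by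
  have hg₀ : Summable fun m : ℕ => g (x + m * T) := by
    rw [← summable_nat_add_iff 1]
    exact_mod_cast hg
  have hshift : ∑' m : ℕ, g (x - T + (m + 1) * T) = ∑' m : ℕ, g (x + m * T) :=
    tsum_congr fun m => by ring_nf
  rw [hshift, hg₀.tsum_eq_zero_add]
  push_cast
  simp

/-- Construction of the transfer function for the time-`T` map:
if `f` is `C^s` (`s ≥ 1`) with `|f^{(r)}(x)| ≤ A(1+|x|)^{−(s+r+1+Re ν)}` for
`0 ≤ r ≤ s`, and `f̂(k/T) = 0` for every integer `k`, then
`u(x) = Σ_{m≥1} f(x+mT)` converges, is `C^s`, solves `u(x−T) − u(x) = f(x)`, and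
satisfies `|u^{(r)}(x)| ≤ (C/T) A (1+|x|)^{−(s+r+Re ν)}` with `C = C(s)`. -/
theorem stmt_7 (s : ℕ) (hs : 1 ≤ s) :
    ∃ C > (0 : ℝ), ∀ (T : ℝ), 0 < T → ∀ (ν : ℂ), 0 ≤ ν.re →
      ∀ (A : ℝ), 0 < A → ∀ f : ℝ → ℂ, ContDiff ℝ s f →
      (∀ r : ℕ, r ≤ s → ∀ x : ℝ,
        ‖iteratedDeriv r f x‖ ≤ A * (1 + |x|) ^ (-((s : ℝ) + r + 1 + ν.re))) →
      (∀ k : ℤ,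
        (∫ x : ℝ, f x * Complex.exp (-2 * Real.pi * I * x * ((k : ℝ) / T))) = 0) →
      (∀ x : ℝ, Summable (fun m : ℕ => f (x + ((m : ℝ) + 1) * T))) ∧
      ContDiff ℝ s (fun x : ℝ => ∑' m : ℕ, f (x + ((m : ℝ) + 1) * T)) ∧
      (∀ x : ℝ,
        (∑' m : ℕ, f (x - T + ((m : ℝ) + 1) * T)) -
          (∑' m : ℕ, f (x + ((m : ℝ) + 1) * T)) = f x) ∧
      (∀ r : ℕ, r ≤ s → ∀ x : ℝ,
        ‖iteratedDeriv r (fun x : ℝ => ∑' m : ℕ, f (x + ((m : ℝ) + 1) * T)) x‖ ≤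
          C / T * A * (1 + |x|) ^ (-((s : ℝ) + r + ν.re))) := by
  refine ⟨3, by norm_num, fun T hT ν hν A _ f hf hdecay hfour => ?_⟩
  replace hdecay : ∀ r ≤ s, DecayBound (iteratedDeriv r f) A (s + r + 1 + ν.re) := hdecay
  have hβ (r : ℕ) : 2 ≤ (s : ℝ) + r + 1 + ν.re := by
    have : (1 : ℝ) ≤ s := by exact_mod_cast hs
    linarith [r.cast_nonneg (α := ℝ)]
  have hcont (r : ℕ) (hr : r ≤ s) : Continuous (iteratedDeriv r f) :=
    hf.continuous_iteratedDeriv r (by exact_mod_cast hr)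
  have hF (r : ℕ) (hr : r ≤ s) (n : ℤ) : 𝓕 (iteratedDeriv r f) (n / T) = 0 := by
    refine Real.fourier_iteratedDeriv_eq_zero hf
      (fun k hk => (hdecay k hk).integrable (hcont k hk) (by linarith [hβ k])) hr ?_
    rw [Real.fourier_eq_integral_mul_exp]
    exact_mod_cast hfour n
  have hsmooth (m : ℕ) : ContDiff ℝ s fun y => f (y + (m + 1) * T) :=
    hf.comp (contDiff_id.add contDiff_const)
  have hbound (k : ℕ) (hk : k ≤ s) :
      HasLocallySummableBound fun (m : ℕ) => iteratedDeriv k fun y => f (y + (m + 1) * T) := by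
    simpa only [iteratedDeriv_comp_add_const] using
      (hdecay k hk).hasLocallySummableBound_shift (by linarith [hβ k]) hT.ne'
  have hsum (x : ℝ) : Summable fun m : ℕ => f (x + (m + 1) * T) := by
    simpa only [iteratedDeriv_zero] using (hbound 0 s.zero_le).summable x
  refine ⟨hsum, contDiff_tsum_of_locallySummableBound hsmooth hbound,
    fun x => tsum_sub_tsum_shift (hsum x), fun r hr x => ?_⟩
  rw [iteratedDeriv_tsum_of_locallySummableBound hsmooth hbound hr]
  simp only [iteratedDeriv_comp_add_const]
  convert (hdecay r hr).norm_tsum_shift_le (hcont r hr) (hβ r) hT (hF r hr) x using 3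
  ring
end

section
/- Let f be holomorphic on the upper half-plane ℍ, and suppose there are s > 1/2 and C > 0 with |f(z)| ≤ C(1+|z|)^{−2s} for all z ∈ ℍ. Then for every ξ ∈ ℝ, the value F(y) = ∫_ℝ f(x+iy) e^{−2πiξ(x+iy)} dx (an absolutely convergent integral) is independent of y ∈ (0,∞); moreover, if ξ ≤ 0 then F(y) = 0 for every y > 0. -/
/-!
Cauchy's theorem on the rectangle `[-R, R] × [y₁, y₂]` relates the two horizontal integrals, and
the decay of `f` makes the integrals over the vertical sides vanish as `R → ∞`; hence `F` does not
depend on `y`. For `ξ ≤ 0` the factor `e^{-2πiξz}` has modulus at most `1` on `ℍ`, so dominated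
convergence gives `F(y) → 0` as `y → ∞`, and the constant `F` must vanish.
-/

open MeasureTheory Complex Filter Topology Set
open scoped Interval

lemma one_add_rpow_neg_le {a u v : ℝ} (ha : 0 ≤ a) (hu : 0 ≤ u) (huv : u ≤ v) :
    (1 + v) ^ (-a) ≤ (1 + u) ^ (-a) :=
  Real.rpow_le_rpow_of_nonpos (by linarith) (by linarith) (by linarith)

lemma tendsto_one_add_norm_rpow_neg_cocompact {F : Type*} [NormedAddCommGroup F] [ProperSpace F]
    {a : ℝ} (ha : 0 < a) : Tendsto (fun x : F => (1 + ‖x‖) ^ (-a)) (cocompact F) (𝓝 0) :=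
  (tendsto_rpow_neg_atTop ha).comp
    (tendsto_atTop_add_const_left _ 1 tendsto_norm_cocompact_atTop)

section ContourShift

variable {E : Type*} [NormedAddCommGroup E]

lemma integrable_horizontal_of_norm_le {g : ℂ → E} {U : Set ℂ} {y : ℝ} (hg : ContinuousOn g U)
    (hU : ∀ x : ℝ, ↑x + ↑y * I ∈ U) {φ : ℝ → ℝ} (hφ : Integrable φ)
    (hle : ∀ x : ℝ, ‖g (x + y * I)‖ ≤ φ x) : Integrable fun x : ℝ => g (x + y * I) :=
  hφ.mono' (hg.comp_continuous (by fun_prop) hU).aestronglyMeasurable (ae_of_all _ hle)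

variable [NormedSpace ℂ E]

lemma intervalIntegral_horizontal_sub_eq_vertical (g : ℂ → E) (R y₁ y₂ : ℝ)
    (hg : DifferentiableOn ℂ g ([[-R, R]] ×ℂ [[y₁, y₂]])) :
    (∫ x in -R..R, g (x + y₁ * I)) - (∫ x in -R..R, g (x + y₂ * I)) =
      I • (∫ y in y₁..y₂, g (↑(-R) + y * I)) - I • ∫ y in y₁..y₂, g (R + y * I) := by
  have h := integral_boundary_rect_eq_zero_of_differentiableOn g ⟨-R, y₁⟩ ⟨R, y₂⟩ hg
  dsimp only at h
  rw [← sub_eq_zero, ← h]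
  abel

theorem integral_horizontal_eq_of_norm_le {g : ℂ → E} {y₁ y₂ : ℝ}
    (hg : DifferentiableOn ℂ g (univ ×ℂ [[y₁, y₂]])) {φ : ℝ → ℝ} (hφ : Integrable φ)
    (hφ_zero : Tendsto φ (cocompact ℝ) (𝓝 0))
    (hle : ∀ x : ℝ, ∀ y ∈ [[y₁, y₂]], ‖g (x + y * I)‖ ≤ φ x) :
    ∫ x : ℝ, g (x + y₁ * I) = ∫ x : ℝ, g (x + y₂ * I) := by
  have hint : ∀ y ∈ [[y₁, y₂]], Integrable fun x : ℝ => g (x + y * I) := fun y hy =>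
    integrable_horizontal_of_norm_le hg.continuousOn (fun x => ⟨trivial, by simpa using hy⟩) hφ
      (hle · y hy)
  have hvert : Tendsto (fun x : ℝ => ∫ y in y₁..y₂, g (x + y * I)) (cocompact ℝ) (𝓝 0) := by
    refine squeeze_zero_norm (fun x => ?_) (by simpa using hφ_zero.mul_const |y₂ - y₁|)
    exact intervalIntegral.norm_integral_le_of_norm_le_const fun y hy =>
      hle x y (uIoc_subset_uIcc hy)
  have hhor : Tendsto (fun R : ℝ => (∫ x in -R..R, g (x + y₁ * I)) - ∫ x in -R..R, g (x + y₂ * I))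
      atTop (𝓝 ((∫ x : ℝ, g (x + y₁ * I)) - ∫ x : ℝ, g (x + y₂ * I))) :=
    (intervalIntegral_tendsto_integral (hint y₁ left_mem_uIcc) tendsto_neg_atTop_atBot
      tendsto_id).sub
      (intervalIntegral_tendsto_integral (hint y₂ right_mem_uIcc) tendsto_neg_atTop_atBot
        tendsto_id)
  have hrect : Tendsto (fun R : ℝ => (∫ x in -R..R, g (x + y₁ * I)) - ∫ x in -R..R, g (x + y₂ * I))
      atTop (𝓝 0) := by
    simp only [fun R => intervalIntegral_horizontal_sub_eq_vertical g R y₁ y₂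
      (hg.mono fun z hz => ⟨trivial, hz.2⟩)]
    simpa using
      ((hvert.comp (tendsto_neg_atTop_atBot.mono_right atBot_le_cocompact)).const_smul I).sub
        ((hvert.comp (tendsto_id.mono_right atTop_le_cocompact)).const_smul I)
  exact sub_eq_zero.mp (tendsto_nhds_unique hhor hrect)

end ContourShift

lemma tendsto_integral_horizontal_atTop_of_norm_le {g : ℂ → ℂ} (hg : ContinuousOn g {z | 0 < z.im})
    {a C : ℝ} (ha : 1 < a) (hC : 0 ≤ C) (hle : ∀ z : ℂ, 0 < z.im → ‖g z‖ ≤ C * (1 + ‖z‖) ^ (-a)) :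
    Tendsto (fun y : ℝ => ∫ x : ℝ, g (x + y * I)) atTop (𝓝 0) := by
  have hle_re : ∀ x y : ℝ, 0 < y → ‖g (x + y * I)‖ ≤ C * (1 + ‖x‖) ^ (-a) := fun x y hy =>
    (hle _ (by simpa using hy)).trans <| mul_le_mul_of_nonneg_left
      (one_add_rpow_neg_le (by linarith) (norm_nonneg _) (by simpa using abs_re_le_norm (x + y * I))) hC
  have hle_im : ∀ x y : ℝ, 0 < y → ‖g (x + y * I)‖ ≤ C * (1 + ‖y‖) ^ (-a) := fun x y hy =>
    (hle _ (by simpa using hy)).trans <| mul_le_mul_of_nonneg_left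
      (one_add_rpow_neg_le (by linarith) (norm_nonneg _) (by simpa using abs_im_le_norm (x + y * I))) hC
  have hpt : ∀ x : ℝ, Tendsto (fun y : ℝ => g (x + y * I)) atTop (𝓝 0) := fun x =>
    squeeze_zero_norm' ((eventually_gt_atTop 0).mono fun y hy => hle_im x y hy)
      (by simpa only [mul_zero] using ((tendsto_one_add_norm_rpow_neg_cocompact (by linarith)).mono_left
        atTop_le_cocompact).const_mul C)
  simpa using tendsto_integral_filter_of_dominated_convergence _
    ((eventually_gt_atTop 0).mono fun y hy =>
      (hg.comp_continuous (by fun_prop) fun x => by simpa using hy).aestronglyMeasurable)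
    ((eventually_gt_atTop 0).mono fun y hy => ae_of_all _ fun x => hle_re x y hy)
    ((integrable_one_add_norm (by simpa using ha)).const_mul C) (ae_of_all _ hpt)

lemma norm_cexp_neg_two_pi_I_mul (ξ : ℝ) (z : ℂ) :
    ‖cexp (-2 * Real.pi * I * ξ * z)‖ = Real.exp (2 * Real.pi * ξ * z.im) := by
  rw [norm_exp]
  congr 1
  simp [mul_re, mul_im]

section FourierIntegral

variable {f : ℂ → ℂ} {s C : ℝ}
  (hbound : ∀ z : ℂ, 0 < z.im → ‖f z‖ ≤ C * (1 + ‖z‖) ^ (-(2 * s)))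
include hbound

lemma norm_mul_cexp_le (ξ : ℝ) {z : ℂ} (hz : 0 < z.im) :
    ‖f z * cexp (-2 * Real.pi * I * ξ * z)‖ ≤
      C * (1 + ‖z‖) ^ (-(2 * s)) * Real.exp (2 * Real.pi * ξ * z.im) := by
  rw [norm_mul, norm_cexp_neg_two_pi_I_mul]
  exact mul_le_mul_of_nonneg_right (hbound z hz) (Real.exp_nonneg _)

lemma norm_mul_cexp_le_of_nonpos (hC : 0 ≤ C) {ξ : ℝ} (hξ : ξ ≤ 0) {z : ℂ} (hz : 0 < z.im) :
    ‖f z * cexp (-2 * Real.pi * I * ξ * z)‖ ≤ C * (1 + ‖z‖) ^ (-(2 * s)) := by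
  refine (norm_mul_cexp_le hbound ξ hz).trans (mul_le_of_le_one_right (by positivity) ?_)
  exact Real.exp_le_one_iff.mpr
    (mul_nonpos_of_nonpos_of_nonneg (by nlinarith [Real.pi_pos]) hz.le)

lemma norm_mul_cexp_le_of_mem_uIcc (hs : 0 ≤ s) (hC : 0 ≤ C) (ξ : ℝ) {y₁ y₂ : ℝ}
    (hy₁ : 0 < y₁) (hy₂ : 0 < y₂) (x : ℝ) {y : ℝ} (hy : y ∈ [[y₁, y₂]]) :
    ‖f (x + y * I) * cexp (-2 * Real.pi * I * ξ * (x + y * I))‖ ≤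
      C * Real.exp (2 * Real.pi * |ξ| * (y₁ + y₂)) * (1 + ‖x‖) ^ (-(2 * s)) := by
  have hy_pos : 0 < y := (lt_min hy₁ hy₂).trans_le hy.1
  have hy_le : y ≤ y₁ + y₂ := hy.2.trans (max_le (by linarith) (by linarith))
  have hexp : Real.exp (2 * Real.pi * ξ * y) ≤ Real.exp (2 * Real.pi * |ξ| * (y₁ + y₂)) := by
    rw [Real.exp_le_exp]
    have : ξ * y ≤ |ξ| * (y₁ + y₂) :=
      (mul_le_mul_of_nonneg_right (le_abs_self ξ) hy_pos.le).trans (by gcongr)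
    nlinarith [Real.pi_pos]
  have hnorm : (1 + ‖(x + y * I : ℂ)‖) ^ (-(2 * s)) ≤ (1 + ‖x‖) ^ (-(2 * s)) :=
    one_add_rpow_neg_le (by linarith) (norm_nonneg _) (by simpa using abs_re_le_norm (x + y * I))
  calc _ ≤ C * (1 + ‖(x + y * I : ℂ)‖) ^ (-(2 * s)) * Real.exp (2 * Real.pi * ξ * y) := by
        simpa using norm_mul_cexp_le hbound ξ (z := x + y * I) (by simpa using hy_pos)
    _ ≤ C * (1 + ‖x‖) ^ (-(2 * s)) * Real.exp (2 * Real.pi * |ξ| * (y₁ + y₂)) :=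
        mul_le_mul (mul_le_mul_of_nonneg_left hnorm hC) hexp (Real.exp_nonneg _) (by positivity)
    _ = _ := by ring

end FourierIntegral

/-- If `f` is holomorphic on the upper half-plane with
`|f(z)| ≤ C(1+|z|)^{−2s}` for some `s > 1/2`, then for each `ξ ∈ ℝ` the
(absolutely convergent) contour Fourier integral
`F(y) = ∫_ℝ f(x+iy) e^{−2πiξ(x+iy)} dx` is independent of `y > 0`, and
vanishes for `ξ ≤ 0`. -/
theorem stmt_8 (f : ℂ → ℂ) (hf : DifferentiableOn ℂ f {z : ℂ | 0 < z.im})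
    (s C : ℝ) (hs : 1 / 2 < s) (hC : 0 < C)
    (hbound : ∀ z : ℂ, 0 < z.im → ‖f z‖ ≤ C * (1 + ‖z‖) ^ (-(2 * s))) :
    ∀ ξ : ℝ,
      (∀ y : ℝ, 0 < y → Integrable (fun x : ℝ =>
        f (x + y * I) * Complex.exp (-2 * Real.pi * I * ξ * (x + y * I)))) ∧
      (∀ y₁ y₂ : ℝ, 0 < y₁ → 0 < y₂ →
        (∫ x : ℝ, f (x + y₁ * I) *
            Complex.exp (-2 * Real.pi * I * ξ * (x + y₁ * I))) =
          (∫ x : ℝ, f (x + y₂ * I) *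
            Complex.exp (-2 * Real.pi * I * ξ * (x + y₂ * I)))) ∧
      (ξ ≤ 0 → ∀ y : ℝ, 0 < y →
        (∫ x : ℝ, f (x + y * I) *
          Complex.exp (-2 * Real.pi * I * ξ * (x + y * I))) = 0) := by
  intro ξ
  have h2s : 1 < 2 * s := by linarith
  have hg : DifferentiableOn ℂ (fun z => f z * cexp (-2 * Real.pi * I * ξ * z))
      {z | 0 < z.im} := hf.mul (by fun_prop)
  have hmaj : ∀ M : ℝ, Integrable fun x : ℝ => C * M * (1 + ‖x‖) ^ (-(2 * s)) := fun M =>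
    (integrable_one_add_norm (by simpa using h2s)).const_mul (C * M)
  have hint : ∀ y : ℝ, 0 < y → Integrable fun x : ℝ =>
      f (x + y * I) * cexp (-2 * Real.pi * I * ξ * (x + y * I)) := fun y hy =>
    integrable_horizontal_of_norm_le hg.continuousOn (fun x => by simpa using hy) (hmaj _)
      (norm_mul_cexp_le_of_mem_uIcc hbound (by linarith) hC.le ξ hy hy · left_mem_uIcc)
  have hconst : ∀ y₁ y₂ : ℝ, 0 < y₁ → 0 < y₂ →
      (∫ x : ℝ, f (x + y₁ * I) * cexp (-2 * Real.pi * I * ξ * (x + y₁ * I))) =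
        ∫ x : ℝ, f (x + y₂ * I) * cexp (-2 * Real.pi * I * ξ * (x + y₂ * I)) :=
    fun y₁ y₂ hy₁ hy₂ => integral_horizontal_eq_of_norm_le
      (hg.mono fun z hz => (lt_min hy₁ hy₂).trans_le hz.2.1) (hmaj _)
      (by simpa only [mul_zero] using
        (tendsto_one_add_norm_rpow_neg_cocompact (by linarith)).const_mul _)
      (norm_mul_cexp_le_of_mem_uIcc hbound (by linarith) hC.le ξ hy₁ hy₂)
  refine ⟨hint, hconst, fun hξ y hy => tendsto_nhds_unique ?_
    (tendsto_integral_horizontal_atTop_of_norm_le hg.continuousOn h2s hC.le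
      fun z hz => norm_mul_cexp_le_of_nonpos hbound hC.le hξ hz)⟩
  exact tendsto_const_nhds.congr' ((eventually_gt_atTop 0).mono fun t ht => hconst y t hy ht)
end

section
/- Let Φ be a polynomial with complex coefficients, let m ≥ 1 and 0 ≤ r ≤ m be integers, and suppose Φ^{(j)}(1) = 0 for every integer r ≤ j ≤ m−1. Then for every ξ in the closed unit disk of ℂ: |Φ^{(r)}(ξ)| ≤ |ξ−1|^{m−r} · ∫_{[0,1]^{m−r}} |Φ^{(m)}( t₁⋯t_{m−r}·(ξ−1) + 1 )| dt₁ ⋯ dt_{m−r}. -/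
/-! Iterate the fundamental theorem of calculus along the segment from `1` to `ξ`: if `P(1) = 0`
then `P(z) = (z - 1) ∫₀¹ P'(s (z - 1) + 1) ds`, and `s (z - 1) + 1` is no farther from `1` than
`z`, so the same estimate can be applied to `P'` at that point. After `m - r` steps Fubini
collects the nested integrals over `[0, 1]` into one integral over the cube `[0, 1]^{m - r}`. -/

open MeasureTheory Polynomial Set

namespace MeasureTheory

variable {α : Type*} [MeasurableSpace α] (ν : Measure α) [SigmaFinite ν] {k : ℕ}
  {E : Type*} [NormedAddCommGroup E]

theorem integral_prod_finCons [NormedSpace ℝ E] (f : (Fin (k + 1) → α) → E) :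
    ∫ p, f (Fin.cons p.1 p.2) ∂ν.prod (Measure.pi fun _ => ν) =
      ∫ u, f u ∂Measure.pi fun _ => ν := by
  simpa [MeasurableEquiv.piFinSuccAbove_symm_apply, Fin.insertNthEquiv, Fin.insertNth_zero'] using
    (measurePreserving_piFinSuccAbove (fun _ => ν) 0).symm.integral_comp' f

theorem Integrable.comp_finCons {f : (Fin (k + 1) → α) → E}
    (hf : Integrable f (Measure.pi fun _ => ν)) :
    Integrable (fun p : α × (Fin k → α) => f (Fin.cons p.1 p.2))
      (ν.prod (Measure.pi fun _ => ν)) := by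
  simpa [MeasurableEquiv.piFinSuccAbove_symm_apply, Fin.insertNthEquiv, Fin.insertNth_zero',
    Function.comp_def] using
    ((measurePreserving_piFinSuccAbove (fun _ => ν) 0).symm.integrable_comp_emb
      (MeasurableEquiv.measurableEmbedding _)).2 hf

theorem integrable_pi_restrict_Icc {ι : Type*} [Fintype ι] {f : (ι → ℝ) → E}
    (hf : Continuous f) (a b : ℝ) :
    Integrable f (Measure.pi fun _ : ι => volume.restrict (Icc a b)) := by
  rw [← Measure.restrict_pi_pi, ← volume_pi]
  exact hf.continuousOn.integrableOn_compact (isCompact_univ_pi fun _ => isCompact_Icc)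

end MeasureTheory

theorem Polynomial.eval_sub_eval_eq_integral (P : ℂ[X]) (a z : ℂ) :
    P.eval z - P.eval a =
      (∫ s in (0 : ℝ)..1, (derivative P).eval (s * (z - a) + a)) * (z - a) := by
  have hderiv (s : ℝ) : HasDerivAt (fun u : ℝ => P.eval (u * (z - a) + a))
      ((derivative P).eval (s * (z - a) + a) * (z - a)) s := by
    have := (P.hasDerivAt _).comp (s : ℂ)
      (((hasDerivAt_id (s : ℂ)).mul_const (z - a)).add_const a)
    simpa using this.comp_ofReal
  rw [← intervalIntegral.integral_mul_const,
    intervalIntegral.integral_eq_sub_of_hasDerivAt (fun s _ => hderiv s)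
      ((by fun_prop : Continuous _).intervalIntegrable 0 1)]
  simp

theorem Polynomial.norm_eval_sub_eval_le (P : ℂ[X]) (a z : ℂ) :
    ‖P.eval z - P.eval a‖ ≤
      ‖z - a‖ * ∫ s in Icc (0 : ℝ) 1, ‖(derivative P).eval (s * (z - a) + a)‖ := by
  rw [P.eval_sub_eval_eq_integral, norm_mul, mul_comm, integral_Icc_eq_integral_Ioc,
    ← intervalIntegral.integral_of_le zero_le_one]
  gcongr
  exact intervalIntegral.norm_integral_le_integral_norm zero_le_one

theorem Polynomial.norm_eval_le_pow_mul_integral_iterate_derivative (P : ℂ[X]) (k : ℕ)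
    (a z : ℂ) (hP : ∀ j < k, (derivative^[j] P).eval a = 0) :
    ‖P.eval z‖ ≤ ‖z - a‖ ^ k *
      ∫ t, ‖(derivative^[k] P).eval ((∏ i, (t i : ℂ)) * (z - a) + a)‖
        ∂Measure.pi fun _ : Fin k => volume.restrict (Icc (0 : ℝ) 1) := by
  induction k generalizing P z with
  | zero => simp [Measure.pi_of_empty (x := Fin.elim0)]
  | succ k ih =>
    set ν := (volume : Measure ℝ).restrict (Icc 0 1)
    set g : (Fin (k + 1) → ℝ) → ℝ :=
      fun u => ‖(derivative^[k + 1] P).eval ((∏ i, (u i : ℂ)) * (z - a) + a)‖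
    have hg : Integrable g (Measure.pi fun _ => ν) := integrable_pi_restrict_Icc (by fun_prop) 0 1
    have hbound : ∀ s ∈ Icc (0 : ℝ) 1, ‖(derivative P).eval (s * (z - a) + a)‖ ≤
        ‖z - a‖ ^ k * ∫ t, g (Fin.cons s t) ∂Measure.pi fun _ => ν := by
      intro s hs
      have hP' : ∀ j < k, (derivative^[j] (derivative P)).eval a = 0 := fun j hj => by
        rw [← Function.iterate_succ_apply]
        exact hP (j + 1) (by omega)
      have hs' : ‖(s : ℂ) * (z - a)‖ ≤ ‖z - a‖ := by
        rw [norm_mul, Complex.norm_real, Real.norm_of_nonneg hs.1]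
        exact mul_le_of_le_one_left (norm_nonneg _) hs.2
      have hcons (t : Fin k → ℝ) : g (Fin.cons s t) = ‖(derivative^[k] (derivative P)).eval
          ((∏ i, (t i : ℂ)) * (s * (z - a) + a - a) + a)‖ := by
        simp only [g, Fin.prod_univ_succ, Fin.cons_zero, Fin.cons_succ,
          Function.iterate_succ_apply, add_sub_cancel_right]
        ring_nf
      simp_rw [hcons]
      refine (ih _ _ hP').trans ?_
      rw [add_sub_cancel_right]
      gcongr
    have ha : P.eval a = 0 := hP 0 k.succ_pos
    calc ‖P.eval z‖ = ‖P.eval z - P.eval a‖ := by rw [ha, sub_zero]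
      _ ≤ ‖z - a‖ * ∫ s, ‖(derivative P).eval (s * (z - a) + a)‖ ∂ν :=
        P.norm_eval_sub_eval_le a z
      _ ≤ ‖z - a‖ * ∫ s, ‖z - a‖ ^ k * ∫ t, g (Fin.cons s t) ∂Measure.pi (fun _ => ν) ∂ν := by
        gcongr ‖z - a‖ * ?_
        refine integral_mono_of_nonneg (.of_forall fun _ => norm_nonneg _)
          (((hg.comp_finCons ν).integral_prod_left).const_mul _) ?_
        exact (ae_restrict_iff' measurableSet_Icc).2 (.of_forall hbound)
      _ = ‖z - a‖ ^ (k + 1) * ∫ u, g u ∂Measure.pi fun _ => ν := by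
        rw [integral_const_mul, ← integral_prod_finCons, integral_prod _ (hg.comp_finCons ν)]
        ring

theorem stmt_10_general (Φ : Polynomial ℂ) (m r : ℕ) (hr : r ≤ m)
    (h : ∀ j : ℕ, r ≤ j → j ≤ m - 1 → ((Polynomial.derivative)^[j] Φ).eval 1 = 0) :
    ∀ ξ : ℂ, ‖ξ‖ ≤ 1 →
      ‖((Polynomial.derivative)^[r] Φ).eval ξ‖ ≤
        ‖ξ - 1‖ ^ (m - r) *
          ∫ t in Set.univ.pi (fun _ : Fin (m - r) => Set.Icc (0 : ℝ) 1),
            ‖((Polynomial.derivative)^[m] Φ).eval ((∏ i, ((t i : ℝ) : ℂ)) * (ξ - 1) + 1)‖ := by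
  intro ξ _
  have key := (derivative^[r] Φ).norm_eval_le_pow_mul_integral_iterate_derivative (m - r) 1 ξ
    fun j hj => by
      rw [← Function.iterate_add_apply]
      exact h (j + r) (by omega) (by omega)
  rwa [← Function.iterate_add_apply, Nat.sub_add_cancel hr, ← Measure.restrict_pi_pi,
    ← volume_pi] at key

/-- Taylor-remainder estimate on the closed unit disk: if
`Φ^{(j)}(1) = 0` for `r ≤ j ≤ m−1`, then for `ξ` in the closed unit disk,
`|Φ^{(r)}(ξ)| ≤ |ξ−1|^{m−r} ∫_{[0,1]^{m−r}} |Φ^{(m)}(t₁⋯t_{m−r}(ξ−1)+1)| dt`. -/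
theorem stmt_10 (Φ : Polynomial ℂ) (m r : ℕ) (hm : 1 ≤ m) (hr : r ≤ m)
    (h : ∀ j : ℕ, r ≤ j → j ≤ m - 1 → ((Polynomial.derivative)^[j] Φ).eval 1 = 0) :
    ∀ ξ : ℂ, ‖ξ‖ ≤ 1 →
      ‖((Polynomial.derivative)^[r] Φ).eval ξ‖ ≤
        ‖ξ - 1‖ ^ (m - r) *
          ∫ t in Set.univ.pi (fun _ : Fin (m - r) => Set.Icc (0 : ℝ) 1),
            ‖((Polynomial.derivative)^[m] Φ).eval ((∏ i, ((t i : ℝ) : ℂ)) * (ξ - 1) + 1)‖ :=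
  stmt_10_general Φ m r hr h
end

section
/- Let ν ≥ 1 be real and T > 0. Let f and u be holomorphic on the upper half-plane ℍ with ∫_ℍ |f(x+iy)|² y^{ν−1} dx dy < ∞ and ∫_ℍ |u(x+iy)|² y^{ν−1} dx dy < ∞, and suppose f(·+iy) ∈ L¹(ℝ) for every y > 0. If u(z−T) − u(z) = ∫_{−T}^0 f(z+t) dt for every z ∈ ℍ, then u'(z) = −f(z) for every z ∈ ℍ. -/
/-!
On each horizontal line `Im z = y`, put `F(x) = ∫₀ˣ f(t + iy) dt`. The hypothesis says that
`u(· + iy) + F` is `T`-periodic. By Fubini, `u(· + iy)` is square integrable for some `y > 0`;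
as `F` has a limit at `+∞`, the continuous periodic function `u(· + iy) + F` then cannot oscillate
and must be constant, so `u' = -f` on that line. The identity theorem for the holomorphic
function `u' + f` then gives `u' = -f` on the whole half-plane.
-/

open MeasureTheory Complex Filter Set Topology

theorem tendsto_intervalIntegral_add_atTop {E : Type*} [NormedAddCommGroup E] [NormedSpace ℝ E]
    {w : ℝ → E} (hw : Integrable w) (ε : ℝ) :
    Tendsto (fun a => ∫ s in a..a + ε, w s) atTop (𝓝 0) := by
  have hlim := intervalIntegral_tendsto_integral_Ioi 0 hw.integrableOn tendsto_id
  have hdiff := (hlim.comp (tendsto_atTop_add_const_right _ ε tendsto_id)).sub hlim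
  rw [sub_self] at hdiff
  refine hdiff.congr fun a => ?_
  exact intervalIntegral.integral_interval_sub_left hw.intervalIntegrable hw.intervalIntegrable

theorem eventually_exists_mem_Icc_lt_of_integrable {w : ℝ → ℝ} (hw : Integrable w)
    {ε r : ℝ} (hε : 0 < ε) (hr : 0 < r) :
    ∀ᶠ a in atTop, ∃ s ∈ Icc a (a + ε), w s < r := by
  filter_upwards [(tendsto_intervalIntegral_add_atTop hw ε).eventually
    (gt_mem_nhds (mul_pos hε hr))] with a ha
  by_contra! hge
  have hmono : ∫ _ in a..a + ε, r ≤ ∫ s in a..a + ε, w s :=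
    intervalIntegral.integral_mono_on (by linarith) intervalIntegrable_const
      hw.intervalIntegrable hge
  simp only [intervalIntegral.integral_const, add_sub_cancel_left, smul_eq_mul] at hmono
  linarith

theorem Function.Periodic.eq_zero_of_tendsto_sub_of_integrable_norm_pow {E : Type*}
    [NormedAddCommGroup E] {H v : ℝ → E} {T : ℝ} {p : ℕ} (hH : Function.Periodic H T)
    (hT : 0 < T) (hHc : Continuous H) (hv : Integrable fun x => ‖v x‖ ^ p)
    (hHv : Tendsto (H - v) atTop (𝓝 0)) : H = 0 := by
  funext x
  by_contra hx
  set c := ‖H x‖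
  have hc : 0 < c := norm_pos_iff.2 hx
  obtain ⟨δ, hδ, hHδ⟩ : ∃ δ > 0, ∀ s, dist s x < δ → c / 2 < ‖H s‖ :=
    Metric.eventually_nhds_iff.1 <|
      hHc.norm.continuousAt.eventually (lt_mem_nhds (by linarith : c / 2 < c))
  have hclose : ∀ᶠ a in atTop, ∀ s ≥ a, ‖H s - v s‖ < c / 4 :=
    eventually_forall_ge_atTop.2 <| by
      simpa using hHv.eventually (Metric.ball_mem_nhds 0 (by linarith : 0 < c / 4))
  have hsmall := eventually_exists_mem_Icc_lt_of_integrable hv hδ (pow_pos (by linarith) p :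
    0 < (c / 4) ^ p)
  have hshift : Tendsto (fun n : ℕ => x - δ / 2 + n * T) atTop atTop :=
    tendsto_atTop_add_const_left _ _ (tendsto_natCast_atTop_atTop.atTop_mul_const hT)
  -- Far out, every window of length `δ` contains a point where `‖v‖ < c / 4`; put one such
  -- window inside `x + nT + (-δ, δ)`, where `‖H‖ > c / 2` by periodicity.
  obtain ⟨n, hfar, s, ⟨hs₁, hs₂⟩, hvs⟩ := (hshift.eventually (hclose.and hsmall)).exists
  have hHs : c / 2 < ‖H s‖ := by
    rw [← hH.sub_nat_mul_eq n]
    exact hHδ _ (by rw [Real.dist_eq, abs_lt]; constructor <;> linarith)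
  have hvs' : ‖v s‖ < c / 4 := lt_of_pow_lt_pow_left₀ p (by linarith) hvs
  have := norm_le_norm_sub_add (H s) (v s)
  linarith [hfar s hs₁]

theorem hasDerivAt_neg_of_sub_eq_intervalIntegral {E : Type*} [NormedAddCommGroup E]
    [NormedSpace ℝ E] [CompleteSpace E] {T : ℝ} (hT : 0 < T) {v g : ℝ → E} {p : ℕ}
    (hv : Continuous v) (hvp : Integrable fun x => ‖v x‖ ^ p) (hg : Integrable g)
    (hgc : Continuous g) (hshift : ∀ x, v (x - T) - v x = ∫ s in (x - T)..x, g s) (x : ℝ) :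
    HasDerivAt v (-g x) x := by
  set F : ℝ → E := fun x => ∫ s in (0 : ℝ)..x, g s
  set L : E := ∫ s in Ioi (0 : ℝ), g s
  have hF : ∀ x, HasDerivAt F (g x) x := fun x => (hgc.integral_hasStrictDerivAt 0 x).hasDerivAt
  have hFc : Continuous F := continuous_iff_continuousAt.2 fun x => (hF x).continuousAt
  have hFL : Tendsto F atTop (𝓝 L) :=
    intervalIntegral_tendsto_integral_Ioi 0 hg.integrableOn tendsto_id
  have hper : Function.Periodic (fun x => v x + F x - L) T := fun x => by
    have hvT := hshift (x + T)
    rw [add_sub_cancel_right] at hvT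
    have hF : F (x + T) - F x = ∫ s in x..x + T, g s :=
      intervalIntegral.integral_interval_sub_left hg.intervalIntegrable hg.intervalIntegrable
    linear_combination (norm := module) hF - hvT
  have hzero := hper.eq_zero_of_tendsto_sub_of_integrable_norm_pow hT
    ((hv.add hFc).sub continuous_const) hvp <| by
      refine (tendsto_sub_nhds_zero_iff.2 hFL).congr fun x => ?_
      simp only [Pi.sub_apply]
      abel
  have hvF : v = fun x => L - F x := funext fun x => by
    have hx : v x + F x - L = 0 := congrFun hzero x
    linear_combination (norm := module) hx
  rw [hvF]
  exact (hF x).const_sub L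

theorem deriv_eq_neg_of_sub_eq_intervalIntegral_on_line {T y : ℝ} (hT : 0 < T) {f u : ℂ → ℂ}
    (hu : ∀ x : ℝ, DifferentiableAt ℂ u (x + y * I))
    (hfc : Continuous fun x : ℝ => f (x + y * I)) (hf : Integrable fun x : ℝ => f (x + y * I))
    (hu2 : Integrable fun x : ℝ => ‖u (x + y * I)‖ ^ 2)
    (hshift : ∀ x : ℝ, u (x + y * I - T) - u (x + y * I) = ∫ t in (-T)..0, f (x + y * I + t))
    (x : ℝ) : deriv u (x + y * I) = -f (x + y * I) := by
  have hline : ∀ x : ℝ, HasDerivAt (fun x : ℝ => u (x + y * I)) (deriv u (x + y * I)) x :=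
    fun x => ((hu x).hasDerivAt.comp_add_const _ _).comp_ofReal
  refine (hline x).unique (hasDerivAt_neg_of_sub_eq_intervalIntegral hT
    (continuous_iff_continuousAt.2 fun x => (hline x).continuousAt) hu2 hf hfc (fun x => ?_) x)
  have h := hshift x
  have hsub := intervalIntegral.integral_comp_add_left (fun s : ℝ => f (s + y * I)) x
    (a := -T) (b := 0)
  rw [add_zero, ← sub_eq_add_neg] at hsub
  rw [← hsub]
  convert h using 3 <;> push_cast <;> ring_nf

theorem exists_mem_integrable_prodMk_left {α β E : Type*} [MeasurableSpace α] [MeasurableSpace β]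
    [NormedAddCommGroup E] {μ : Measure α} {ν : Measure β} [SFinite μ] [SFinite ν]
    {F : α × β → E} {s : Set β} (hs : MeasurableSet s) (hνs : ν s ≠ 0)
    (hF : IntegrableOn F (univ ×ˢ s) (μ.prod ν)) :
    ∃ y ∈ s, Integrable (fun x => F (x, y)) μ := by
  rw [IntegrableOn, ← Measure.prod_restrict, Measure.restrict_univ] at hF
  have : (ae (ν.restrict s)).NeBot := ae_neBot.2 (Measure.restrict_eq_zero.not.2 hνs)
  exact ((ae_restrict_mem hs).and hF.prod_left_ae).exists

theorem AnalyticOnNhd.eqOn_zero_of_forall_add_ofReal_eq_zero {h : ℂ → ℂ} {U : Set ℂ}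
    (hh : AnalyticOnNhd ℂ h U) (hU : IsPreconnected U) {z₀ : ℂ} (hz₀ : z₀ ∈ U)
    (hline : ∀ t : ℝ, h (z₀ + t) = 0) : EqOn h 0 U := by
  refine hh.eqOn_zero_of_preconnected_of_frequently_eq_zero hU hz₀ ?_
  have hto : Tendsto (fun t : ℝ => z₀ + t) (𝓝[≠] 0) (𝓝[≠] z₀) := by
    refine tendsto_nhdsWithin_of_tendsto_nhds_of_eventually_within _ ?_ ?_
    · exact ((by fun_prop : Continuous fun t : ℝ => z₀ + t).tendsto' 0 z₀ (by simp)).mono_left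
        nhdsWithin_le_nhds
    · filter_upwards [self_mem_nhdsWithin] with t ht
      simpa using ht
  exact hto.frequently (Eventually.frequently (Eventually.of_forall hline))

theorem stmt_12_general (ν T : ℝ) (hT : 0 < T) (f u : ℂ → ℂ)
    (hf : DifferentiableOn ℂ f {z : ℂ | 0 < z.im})
    (hu : DifferentiableOn ℂ u {z : ℂ | 0 < z.im})
    (huL2 : IntegrableOn
      (fun p : ℝ × ℝ => ‖u (p.1 + p.2 * I)‖ ^ 2 * p.2 ^ (ν - 1))
      (Set.univ ×ˢ Set.Ioi (0 : ℝ)))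
    (hfL1 : ∀ y : ℝ, 0 < y → Integrable (fun x : ℝ => f (x + y * I)))
    (heq : ∀ z : ℂ, 0 < z.im → u (z - (T : ℂ)) - u z = ∫ t in (-T)..0, f (z + (t : ℂ))) :
    ∀ z : ℂ, 0 < z.im → deriv u z = -f z := by
  have hUopen : IsOpen {z : ℂ | 0 < z.im} := isOpen_lt continuous_const continuous_im
  have hline_mem : ∀ {y : ℝ}, 0 < y → ∀ x : ℝ, (x + y * I : ℂ) ∈ {z : ℂ | 0 < z.im} := by
    intro y hy x
    simpa using hy
  rw [Measure.volume_eq_prod] at huL2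
  obtain ⟨y, hy, hyL2⟩ := exists_mem_integrable_prodMk_left measurableSet_Ioi
    (by simp) huL2
  rw [integrable_mul_const_iff (Real.rpow_pos_of_pos hy _).ne'.isUnit] at hyL2
  have hderiv := deriv_eq_neg_of_sub_eq_intervalIntegral_on_line hT
    (fun x => hu.differentiableAt (hUopen.mem_nhds (hline_mem hy x)))
    (hf.continuousOn.comp_continuous (by fun_prop) (hline_mem hy)) (hfL1 y hy) hyL2
    (fun x => heq _ (hline_mem hy x))
  have hzero := ((hu.analyticOnNhd hUopen).deriv.add (hf.analyticOnNhd hUopen))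
    |>.eqOn_zero_of_forall_add_ofReal_eq_zero (convex_halfSpace_im_gt 0).isPreconnected
      (z₀ := y * I) (by simpa using hy) fun t => by
        simp [add_comm (y * I : ℂ), hderiv t]
  intro z hz
  exact eq_neg_of_add_eq_zero_left (hzero hz)

/-- Discrete-series version of Proposition on `A_T`:
if `f, u` are holomorphic on the upper half-plane, square-integrable for
`y^{ν−1} dx dy` (`ν ≥ 1`), `f(·+iy) ∈ L¹(ℝ)` for all `y > 0`, and
`u(z−T) − u(z) = ∫_{−T}^0 f(z+t) dt` on the upper half-plane, then
`u' = −f` there. -/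
theorem stmt_12 (ν T : ℝ) (hν : 1 ≤ ν) (hT : 0 < T) (f u : ℂ → ℂ)
    (hf : DifferentiableOn ℂ f {z : ℂ | 0 < z.im})
    (hu : DifferentiableOn ℂ u {z : ℂ | 0 < z.im})
    (hfL2 : IntegrableOn
      (fun p : ℝ × ℝ => ‖f (p.1 + p.2 * I)‖ ^ 2 * p.2 ^ (ν - 1))
      (Set.univ ×ˢ Set.Ioi (0 : ℝ)))
    (huL2 : IntegrableOn
      (fun p : ℝ × ℝ => ‖u (p.1 + p.2 * I)‖ ^ 2 * p.2 ^ (ν - 1))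
      (Set.univ ×ˢ Set.Ioi (0 : ℝ)))
    (hfL1 : ∀ y : ℝ, 0 < y → Integrable (fun x : ℝ => f (x + y * I)))
    (heq : ∀ z : ℂ, 0 < z.im → u (z - (T : ℂ)) - u z = ∫ t in (-T)..0, f (z + (t : ℂ))) :
    ∀ z : ℂ, 0 < z.im → deriv u z = -f z :=
  stmt_12_general ν T hT f u hf hu huL2 hfL1 heq
end

section
/- Let ν = 1 (so n = 1, μ = 0, u_k(z) = ((z−i)/(z+i))^{k−1}(z+i)^{−2} and ‖u_k‖² = π/(4k)), and let ε > 0. Let f = Σ_{k≥1} c_k u_k ∈ L²(ℍ, dλ_1) with ‖f‖_{1+ε}² = Σ_{k≥1} |c_k|² (1+8k²)^{1+ε} ‖u_k‖² < ∞. Then there is a constant C > 0 depending only on ε such that for all z ∈ ℍ: |f(z)| ≤ C ‖f‖_{1+ε} (1+|z|)^{−2}. -/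
/-!
Writing `c j = (c j √a_j) · a_j^{-1/2}` for the Sobolev weights `a_j`, Cauchy–Schwarz bounds
`∑ ‖c j‖` by `‖f‖_{1+ε}` times `(∑ a_j⁻¹)^{1/2}`, which is finite because
`a_j ≍ (j+1)^{1+2ε}`. Each `u_k` is bounded by `2 (1 + ‖z‖)⁻²` on the upper
half-plane, since `(z - i)/(z + i)` lies in the closed unit disc and
`(1 + ‖z‖)² ≤ 2 ‖z + i‖²` there.
-/

open Complex

/-- The weight `(1 + 8k²)^s ‖u_k‖²` of `u_k`, `k = j + 1`, in `‖·‖_s²` for `ν = 1`. -/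
noncomputable def sobolevWeight (s : ℝ) (j : ℕ) : ℝ :=
  (1 + 8 * ((j : ℝ) + 1) ^ 2) ^ s * (Real.pi / (4 * ((j : ℝ) + 1)))

/-- The basis function `u_{j+1}` for `ν = 1`. -/
noncomputable def mockBasis (j : ℕ) (z : ℂ) : ℂ :=
  ((z - I) / (z + I)) ^ j * (z + I) ^ (-2 : ℤ)

lemma sobolevWeight_pos (s : ℝ) (j : ℕ) : 0 < sobolevWeight s j := by
  unfold sobolevWeight; positivity

lemma pi_div_four_mul_rpow_le_sobolevWeight {s : ℝ} (hs : 0 ≤ s) (j : ℕ) :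
    Real.pi / 4 * ((j : ℝ) + 1) ^ (2 * s - 1) ≤ sobolevWeight s j := by
  set t : ℝ := (j : ℝ) + 1
  have ht : 0 < t := by positivity
  have hpow : t ^ (2 * s) ≤ (1 + 8 * t ^ 2) ^ s := by
    rw [Real.rpow_mul ht.le, Real.rpow_two]
    exact Real.rpow_le_rpow (by positivity) (by nlinarith) hs
  calc Real.pi / 4 * t ^ (2 * s - 1) = t ^ (2 * s) * (Real.pi / (4 * t)) := by
        rw [Real.rpow_sub_one ht.ne']; field_simp
    _ ≤ sobolevWeight s j := mul_le_mul_of_nonneg_right hpow (by positivity)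

lemma summable_inv_sobolevWeight {s : ℝ} (hs : 1 < s) :
    Summable fun j => (sobolevWeight s j)⁻¹ := by
  have hp : Summable fun j : ℕ => (((j : ℝ) + 1) ^ (2 * s - 1))⁻¹ := by
    have := (summable_nat_add_iff 1).2 (Real.summable_nat_rpow_inv.2 (by linarith : 1 < 2 * s - 1))
    simpa only [Nat.cast_add, Nat.cast_one] using this
  refine Summable.of_nonneg_of_le (fun j => (inv_pos.2 (sobolevWeight_pos s j)).le)
    (fun j => ?_) (hp.mul_left (4 / Real.pi))
  calc (sobolevWeight s j)⁻¹ ≤ (Real.pi / 4 * ((j : ℝ) + 1) ^ (2 * s - 1))⁻¹ :=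
        inv_anti₀ (by positivity) (pi_div_four_mul_rpow_le_sobolevWeight (by linarith) j)
    _ = 4 / Real.pi * (((j : ℝ) + 1) ^ (2 * s - 1))⁻¹ := by rw [mul_inv, inv_div]

lemma summable_norm_and_tsum_norm_le_of_weighted {ι E : Type*} [SeminormedAddGroup E]
    {c : ι → E} {a : ι → ℝ} (ha : ∀ i, 0 < a i)
    (hca : Summable fun i => ‖c i‖ ^ 2 * a i) (hinv : Summable fun i => (a i)⁻¹) :
    Summable (fun i => ‖c i‖) ∧
      ∑' i, ‖c i‖ ≤ √(∑' i, ‖c i‖ ^ 2 * a i) * √(∑' i, (a i)⁻¹) := by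
  have hsq_left : ∀ i, (‖c i‖ * √(a i)) ^ (2 : ℝ) = ‖c i‖ ^ 2 * a i := fun i => by
    rw [Real.rpow_two, mul_pow, Real.sq_sqrt (ha i).le]
  have hsq_right : ∀ i, √(a i)⁻¹ ^ (2 : ℝ) = (a i)⁻¹ := fun i => by
    rw [Real.rpow_two, Real.sq_sqrt (inv_pos.2 (ha i)).le]
  have hprod : ∀ i, ‖c i‖ * √(a i) * √(a i)⁻¹ = ‖c i‖ := fun i => by
    rw [mul_assoc, ← Real.sqrt_mul (ha i).le, mul_inv_cancel₀ (ha i).ne', Real.sqrt_one,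
      mul_one]
  have := Real.summable_and_inner_le_Lp_mul_Lq_tsum_of_nonneg
    (f := fun i => ‖c i‖ * √(a i)) (g := fun i => √(a i)⁻¹) .two_two
    (fun i => by positivity) (fun i => Real.sqrt_nonneg _)
    (by simpa only [hsq_left] using hca) (by simpa only [hsq_right] using hinv)
  simpa only [hprod, hsq_left, hsq_right, ← Real.sqrt_eq_rpow] using this

lemma norm_sub_I_le_norm_add_I {z : ℂ} (hz : 0 ≤ z.im) : ‖z - I‖ ≤ ‖z + I‖ := by
  rw [← sq_le_sq₀ (norm_nonneg _) (norm_nonneg _), Complex.sq_norm, Complex.sq_norm,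
    normSq_apply, normSq_apply]
  simp only [sub_re, sub_im, add_re, add_im, I_re, I_im]
  nlinarith

lemma one_add_norm_sq_le_two_mul_norm_add_I_sq {z : ℂ} (hz : 0 ≤ z.im) :
    (1 + ‖z‖) ^ 2 ≤ 2 * ‖z + I‖ ^ 2 := by
  have hzI : ‖z + I‖ ^ 2 = ‖z‖ ^ 2 + 2 * z.im + 1 := by
    simp only [Complex.sq_norm, normSq_apply, add_re, add_im, I_re, I_im]
    ring
  nlinarith [sq_nonneg (1 - ‖z‖)]

lemma norm_mockBasis_le {z : ℂ} (hz : 0 ≤ z.im) (j : ℕ) :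
    ‖mockBasis j z‖ ≤ 2 * (1 + ‖z‖) ^ (-2 : ℤ) := by
  have hzI : 0 < ‖z + I‖ := by
    refine norm_pos_iff.2 fun h => ?_
    have := congrArg im h
    simp only [add_im, I_im, zero_im] at this
    linarith
  have hw : ‖(z - I) / (z + I)‖ ≤ 1 := by
    rw [norm_div, div_le_one hzI]
    exact norm_sub_I_le_norm_add_I hz
  have hinv : (‖z + I‖ ^ 2)⁻¹ ≤ 2 * ((1 + ‖z‖) ^ 2)⁻¹ := by
    rw [← div_eq_mul_inv, le_div_iff₀ (by positivity), ← div_eq_inv_mul,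
      div_le_iff₀ (by positivity)]
    exact one_add_norm_sq_le_two_mul_norm_add_I_sq hz
  calc ‖mockBasis j z‖ = ‖(z - I) / (z + I)‖ ^ j * (‖z + I‖ ^ 2)⁻¹ := by
        simp [mockBasis, norm_pow, zpow_neg]
    _ ≤ 1 * (‖z + I‖ ^ 2)⁻¹ := by gcongr; exact pow_le_one₀ (norm_nonneg _) hw
    _ ≤ 2 * (1 + ‖z‖) ^ (-2 : ℤ) := by simpa [zpow_neg] using hinv

/-- Mock discrete series decay (`ν = 1`, `n = 1`, `μ = 0`): if
`f = Σ_{k≥1} c_k u_k` with `u_k(z) = ((z−i)/(z+i))^{k−1}(z+i)^{−2}`,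
`‖u_k‖² = π/(4k)`, and `‖f‖_{1+ε}² = Σ_{k≥1} |c_k|²(1+8k²)^{1+ε}‖u_k‖² < ∞`,
then `|f(z)| ≤ C_ε ‖f‖_{1+ε} (1+|z|)^{−2}` on the upper half-plane.
(Here `c j` is the coefficient of `u_{j+1}`.) -/
theorem stmt_17 (ε : ℝ) (hε : 0 < ε) :
    ∃ C > (0 : ℝ), ∀ (c : ℕ → ℂ) (f : ℂ → ℂ),
      (∀ z : ℂ, 0 < z.im →
        HasSum (fun j : ℕ => c j * (((z - I) / (z + I)) ^ j * (z + I) ^ (-2 : ℤ))) (f z)) →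
      Summable (fun j : ℕ =>
        ‖c j‖ ^ 2 * (1 + 8 * ((j : ℝ) + 1) ^ 2) ^ (1 + ε) *
          (Real.pi / (4 * ((j : ℝ) + 1)))) →
      ∀ z : ℂ, 0 < z.im →
        ‖f z‖ ≤ C *
          Real.sqrt (∑' j : ℕ,
            ‖c j‖ ^ 2 * (1 + 8 * ((j : ℝ) + 1) ^ 2) ^ (1 + ε) *
              (Real.pi / (4 * ((j : ℝ) + 1)))) *
          (1 + ‖z‖) ^ (-2 : ℤ) := by
  have hinv := summable_inv_sobolevWeight (by linarith : 1 < 1 + ε)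
  set K := ∑' j, (sobolevWeight (1 + ε) j)⁻¹
  have hK : 0 < K := hinv.tsum_pos (fun j => (inv_pos.2 (sobolevWeight_pos _ j)).le) 0
    (inv_pos.2 (sobolevWeight_pos _ 0))
  refine ⟨2 * √K, by positivity, fun c f hf hsum z hz => ?_⟩
  have hnorm : ∀ j, ‖c j‖ ^ 2 * (1 + 8 * ((j : ℝ) + 1) ^ 2) ^ (1 + ε) *
      (Real.pi / (4 * ((j : ℝ) + 1))) = ‖c j‖ ^ 2 * sobolevWeight (1 + ε) j :=
    fun j => mul_assoc _ _ _
  obtain ⟨hc, hcK⟩ := summable_norm_and_tsum_norm_le_of_weighted (sobolevWeight_pos (1 + ε))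
    (hsum.congr hnorm) hinv
  have hfz : ‖f z‖ ≤ (∑' j, ‖c j‖) * (2 * (1 + ‖z‖) ^ (-2 : ℤ)) :=
    (hf z hz).norm_le_of_bounded (hc.hasSum.mul_right _) fun j =>
      (norm_mul_le _ _).trans (by gcongr; exact norm_mockBasis_le hz.le j)
  rw [tsum_congr hnorm]
  calc ‖f z‖ ≤ (∑' j, ‖c j‖) * (2 * (1 + ‖z‖) ^ (-2 : ℤ)) := hfz
    _ ≤ (√(∑' j, ‖c j‖ ^ 2 * sobolevWeight (1 + ε) j) * √K) *
          (2 * (1 + ‖z‖) ^ (-2 : ℤ)) := by gcongr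
    _ = _ := by ring
end
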